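/- arXiv:1806.01392 — 6 statements merged into one kernel-verified Lean document; each statement's English description precedes it below -/
import Mathlib

section
/- For every natural number N, the limit as c → ∞ of c^N e^{-c} ∑_{k=0}^∞ c^k / (k! (k+1)^N) equals 1. -/
/-!
With `r k = (k + N)! / (k! (k + 1) ^ N) = ∏_{i < N} (k + 1 + i) / (k + 1)`, the expression equals
`e^{-c} ∑_k c^(k+N) / (k+N)! · r k`, the mean of `r (K - N)` for `K` Poisson of parameter `c`.
Since `r k → 1` and a Poisson law of parameter `c → ∞` gives vanishing mass to every finite set
(Borel summation is regular), this mean tends to `1`.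
-/

open Filter Finset Nat Topology

theorem hasSum_pow_div_factorial_exp (c : ℝ) : HasSum (fun m : ℕ => c ^ m / m !) (Real.exp c) :=
  Real.exp_eq_exp_ℝ ▸ NormedSpace.expSeries_div_hasSum_exp c

theorem summable_pow_div_factorial_mul_of_tendsto {r : ℕ → ℝ} {L : ℝ}
    (hr : Tendsto r atTop (𝓝 L)) (c : ℝ) : Summable fun m : ℕ => c ^ m / m ! * r m := by
  obtain ⟨B, hB⟩ := hr.norm.bddAbove_range
  refine .of_norm_bounded ((Real.summable_pow_div_factorial |c|).mul_right B) fun m => ?_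
  rw [norm_mul, norm_div, norm_pow, Real.norm_natCast, Real.norm_eq_abs]
  exact mul_le_mul_of_nonneg_left (hB ⟨m, rfl⟩) (by positivity)

theorem tendsto_exp_neg_mul_sum_range_pow_div_factorial_mul (a : ℕ → ℝ) (M : ℕ) :
    Tendsto (fun c : ℝ => Real.exp (-c) * ∑ m ∈ range M, c ^ m / m ! * a m) atTop (𝓝 0) := by
  have h := tendsto_finsetSum (range M) fun m _ =>
    (Real.tendsto_pow_mul_exp_neg_atTop_nhds_zero m).mul_const (a m / m !)
  simp only [zero_mul, sum_const_zero] at h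
  refine h.congr fun c => ?_
  rw [mul_sum]
  exact sum_congr rfl fun m _ => by ring

theorem abs_tsum_pow_div_factorial_mul_le {r : ℕ → ℝ} {M : ℕ} {ε c : ℝ} (hc : 0 ≤ c)
    (hs : Summable fun m : ℕ => c ^ m / m ! * r m) (hM : ∀ m ≥ M, |r m| ≤ ε) :
    |∑' m, c ^ m / m ! * r m| ≤ ∑ m ∈ range M, c ^ m / m ! * |r m| + ε * Real.exp c := by
  have hterm : ∀ m : ℕ, |c ^ m / m ! * r m| = c ^ m / m ! * |r m| := fun m => by
    rw [abs_mul, abs_of_nonneg (by positivity)]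
  have habs : Summable fun m : ℕ => c ^ m / m ! * |r m| := by simpa only [hterm] using hs.abs
  have hε : 0 ≤ ε := (abs_nonneg _).trans (hM M le_rfl)
  have htail : ∑' k, c ^ (k + M) / (k + M)! * |r (k + M)| ≤ ε * Real.exp c := calc
    _ ≤ ∑' k, ε * (c ^ (k + M) / (k + M)!) :=
        Summable.tsum_le_tsum (fun k => by rw [mul_comm]; gcongr; exact hM _ (le_add_self))
          ((summable_nat_add_iff M).2 habs)
          (((summable_nat_add_iff M).2 (Real.summable_pow_div_factorial c)).mul_left ε)
    _ ≤ ε * Real.exp c := by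
        rw [tsum_mul_left, ← (hasSum_pow_div_factorial_exp c).tsum_eq]
        exact mul_le_mul_of_nonneg_left (tsum_comp_le_tsum_of_inj
          (Real.summable_pow_div_factorial c) (fun m => by positivity) (add_left_injective M)) hε
  calc |∑' m, c ^ m / m ! * r m| ≤ ∑' m, c ^ m / m ! * |r m| := by
        simpa only [Real.norm_eq_abs, hterm] using norm_tsum_le_tsum_norm hs.norm
    _ = ∑ m ∈ range M, c ^ m / m ! * |r m| + ∑' k, c ^ (k + M) / (k + M)! * |r (k + M)| :=
        (habs.sum_add_tsum_nat_add M).symm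
    _ ≤ _ := by gcongr

theorem tendsto_exp_neg_mul_tsum_pow_div_factorial_mul_of_tendsto_zero {r : ℕ → ℝ}
    (hr : Tendsto r atTop (𝓝 0)) :
    Tendsto (fun c : ℝ => Real.exp (-c) * ∑' m, c ^ m / m ! * r m) atTop (𝓝 0) := by
  refine Metric.tendsto_nhds.2 fun ε hε => ?_
  obtain ⟨M, hM⟩ := eventually_atTop.1
    (hr.eventually (Metric.closedBall_mem_nhds (0 : ℝ) (half_pos hε)))
  have hM' : ∀ m ≥ M, |r m| ≤ ε / 2 := fun m hm => by
    simpa [Real.dist_eq] using hM m hm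
  filter_upwards [eventually_ge_atTop 0,
    (tendsto_exp_neg_mul_sum_range_pow_div_factorial_mul (fun m => |r m|) M).eventually
      (gt_mem_nhds (half_pos hε))] with c hc hhead
  have hsum := abs_tsum_pow_div_factorial_mul_le hc
    (summable_pow_div_factorial_mul_of_tendsto hr c) hM'
  rw [Real.dist_eq, sub_zero, abs_mul, abs_of_pos (Real.exp_pos _)]
  calc Real.exp (-c) * |∑' m, c ^ m / m ! * r m|
      ≤ Real.exp (-c) * (∑ m ∈ range M, c ^ m / m ! * |r m| + ε / 2 * Real.exp c) :=
        mul_le_mul_of_nonneg_left hsum (Real.exp_pos _).le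
    _ = Real.exp (-c) * ∑ m ∈ range M, c ^ m / m ! * |r m| + ε / 2 := by
        rw [mul_add, mul_left_comm, ← Real.exp_add, neg_add_cancel, Real.exp_zero, mul_one]
    _ < ε := by linarith

theorem tendsto_exp_neg_mul_tsum_pow_div_factorial_mul {r : ℕ → ℝ} {L : ℝ}
    (hr : Tendsto r atTop (𝓝 L)) :
    Tendsto (fun c : ℝ => Real.exp (-c) * ∑' m, c ^ m / m ! * r m) atTop (𝓝 L) := by
  have hr₀ : Tendsto (fun m => r m - L) atTop (𝓝 0) := by simpa using hr.sub_const L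
  have h := (tendsto_exp_neg_mul_tsum_pow_div_factorial_mul_of_tendsto_zero hr₀).add_const L
  rw [zero_add] at h
  refine h.congr fun c => ?_
  have hsum : HasSum (fun m : ℕ => c ^ m / m ! * r m)
      (∑' m, c ^ m / m ! * (r m - L) + Real.exp c * L) := by
    convert ((summable_pow_div_factorial_mul_of_tendsto hr₀ c).hasSum.add
      ((hasSum_pow_div_factorial_exp c).mul_right L)) using 1
    ext m; ring
  rw [hsum.tsum_eq, mul_add, ← mul_assoc, ← Real.exp_add, neg_add_cancel, Real.exp_zero, one_mul]

theorem tendsto_exp_neg_mul_tsum_pow_add_div_factorial_mul {r : ℕ → ℝ} {L : ℝ}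
    (hr : Tendsto r atTop (𝓝 L)) (N : ℕ) :
    Tendsto (fun c : ℝ => Real.exp (-c) * ∑' k, c ^ (k + N) / (k + N)! * r k) atTop (𝓝 L) := by
  set s : ℕ → ℝ := fun m => if N ≤ m then r (m - N) else 0
  have hs : Tendsto s atTop (𝓝 L) :=
    (hr.comp (tendsto_sub_atTop_nat N)).congr'
      (eventually_atTop.2 ⟨N, fun m hm => by simp [s, hm]⟩)
  refine (tendsto_exp_neg_mul_tsum_pow_div_factorial_mul hs).congr fun c => ?_
  rw [← (add_left_injective N).tsum_eq]
  · simp [s]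
  · intro m hm
    have hNm : N ≤ m := by
      by_contra h
      simp [s, h] at hm
    exact ⟨m - N, Nat.sub_add_cancel hNm⟩

theorem tendsto_factorial_add_div_factorial_mul_pow (N : ℕ) :
    Tendsto (fun k : ℕ => ((k + N)! : ℝ) / (k ! * ((k : ℝ) + 1) ^ N)) atTop (𝓝 1) := by
  have hfactor : ∀ i : ℕ, Tendsto (fun k : ℕ => ((k : ℝ) + 1 + i) / ((k : ℝ) + 1)) atTop (𝓝 1) := by
    intro i
    have h := (tendsto_one_div_add_atTop_nhds_zero_nat.const_mul (i : ℝ)).const_add 1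
    rw [mul_zero, add_zero] at h
    refine h.congr fun k => ?_
    field_simp
  have h := tendsto_finsetProd (range N) fun i _ => hfactor i
  rw [prod_const_one] at h
  refine h.congr fun k => ?_
  rw [← factorial_mul_ascFactorial, ascFactorial_eq_prod_range, prod_div_distrib, prod_const,
    card_range]
  push_cast
  field_simp

theorem limit_cN_exp_sum (N : ℕ) :
    Tendsto (fun c : ℝ => c ^ N * Real.exp (-c) *
      ∑' k : ℕ, c ^ k / ((Nat.factorial k : ℝ) * ((k : ℝ) + 1) ^ N))
      atTop (nhds 1) := by
  refine (tendsto_exp_neg_mul_tsum_pow_add_div_factorial_mul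
    (tendsto_factorial_add_div_factorial_mul_pow N) N).congr fun c => ?_
  rw [mul_comm (c ^ N), mul_assoc]
  congr 1
  rw [← tsum_mul_left]
  refine tsum_congr fun k => ?_
  field_simp
  ring
end

section
/- If S is a Poisson random variable (representing |S|) with mean c > 0, then E[(c/(1+S) - 1)^2] → 0 as c → ∞. -/
/-!
For `S ∼ Po(r)` the weight `r ^ m / ((S + 1) ⋯ (S + m))` shifts the distribution by `m`:
`P(S = k) · r ^ m / ((k + 1) ⋯ (k + m)) = P(S = k + m)`, so its mean is `P(S ≥ m)`.
Dominating `1 / (k + 1) ^ 2` by `1 / ((k + 1)(k + 2)) + 3 / ((k + 1)(k + 2)(k + 3))` then gives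
`E[(r / (1 + S) - 1) ^ 2] ≤ P(S ≥ 2) + 3 / r · P(S ≥ 3) - 2 P(S ≥ 1) + 1 ≤ 3 / r + 2 e^{-r}`.
-/

open Filter MeasureTheory ProbabilityTheory

open Real
open scoped NNReal Nat

lemma inv_sq_le_of_one_le {x : ℝ} (hx : 1 ≤ x) :
    (x ^ 2)⁻¹ ≤ (x * (x + 1))⁻¹ + 3 * (x * (x + 1) * (x + 2))⁻¹ := by
  have hx0 : 0 < x := by linarith
  have key : (x * (x + 1))⁻¹ + 3 * (x * (x + 1) * (x + 2))⁻¹ - (x ^ 2)⁻¹ =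
      2 * (x - 1) / (x ^ 2 * (x + 1) * (x + 2)) := by
    field_simp
    ring
  rw [← sub_nonneg, key]
  exact div_nonneg (by linarith) (by positivity)

lemma sq_div_one_add_sub_one_le (r : ℝ) (k : ℕ) :
    (r / (1 + k) - 1) ^ 2 ≤
      r ^ 2 / (k + 1).ascFactorial 2 + 3 / r * (r ^ 3 / (k + 1).ascFactorial 3) -
        2 * (r ^ 1 / (k + 1).ascFactorial 1) + 1 := by
  set x : ℝ := 1 + k with hx
  have hx1 : 1 ≤ x := by simp [hx]
  have hx0 : 0 < x := by linarith
  have hasc (m : ℕ) : ((k + 1).ascFactorial m : ℝ) = ∏ i ∈ Finset.range m, (x + i) := by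
    simp [Nat.ascFactorial_eq_prod_range, hx, add_comm]
  simp only [hasc, Finset.prod_range_succ, Finset.prod_range_zero, Nat.cast_zero, Nat.cast_one,
    Nat.cast_ofNat, one_mul, add_zero, pow_one]
  have key : r ^ 2 / (x * (x + 1)) + 3 / r * (r ^ 3 / (x * (x + 1) * (x + 2))) - 2 * (r / x) + 1 -
      (r / x - 1) ^ 2 =
      r ^ 2 * ((x * (x + 1))⁻¹ + 3 * (x * (x + 1) * (x + 2))⁻¹ - (x ^ 2)⁻¹) := by
    field_simp
    ring
  rw [← sub_nonneg, key]
  exact mul_nonneg (sq_nonneg r) (sub_nonneg.2 (inv_sq_le_of_one_le hx1))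

namespace ProbabilityTheory

lemma poisson_weight_mul_pow_div_ascFactorial (r : ℝ≥0) (k m : ℕ) :
    exp (-r) * r ^ k / k ! * (r ^ m / (k + 1).ascFactorial m) =
      exp (-r) * r ^ (k + m) / (k + m)! := by
  rw [← Nat.factorial_mul_ascFactorial, pow_add]
  push_cast
  have := (Nat.factorial_pos k).ne'
  have := (Nat.ascFactorial_pos k m).ne'
  field_simp

lemma integral_pow_div_ascFactorial_poissonMeasure (r : ℝ≥0) (m : ℕ) :
    ∫ k, (r : ℝ) ^ m / (k + 1).ascFactorial m ∂Po(r) = Po(r).real (Set.Ici m) := by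
  have htail := (hasSum_nat_add_iff' m).2 (hasSum_one_poissonMeasure r)
  simp only [← poisson_weight_mul_pow_div_ascFactorial] at htail
  rw [integral_poissonMeasure]
  simp only [smul_eq_mul]
  rw [htail.tsum_eq, ← Set.compl_Iio, probReal_compl_eq_one_sub measurableSet_Iio,
    ← Finset.coe_range, ← sum_measureReal_singleton]
  simp [poissonMeasure_real_singleton]

lemma integrable_pow_div_ascFactorial_poissonMeasure (r : ℝ≥0) (m : ℕ) :
    Integrable (fun k : ℕ ↦ (r : ℝ) ^ m / (k + 1).ascFactorial m) Po(r) := by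
  refine .of_bound .of_discrete ((r : ℝ) ^ m) (.of_forall fun k ↦ ?_)
  rw [Real.norm_of_nonneg (by positivity)]
  exact div_le_self (by positivity) (by exact_mod_cast Nat.ascFactorial_pos k m)

lemma poissonMeasure_real_Ici_one (r : ℝ≥0) : Po(r).real (Set.Ici 1) = 1 - exp (-r) := by
  have hcompl : Set.Ici 1 = ({0}ᶜ : Set ℕ) := by
    ext k
    simp [Nat.one_le_iff_ne_zero]
  rw [hcompl, probReal_compl_eq_one_sub (measurableSet_singleton 0), poissonMeasure_real_singleton]
  simp

lemma integral_sq_div_one_add_sub_one_poissonMeasure_le (r : ℝ≥0) :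
    ∫ k, ((r : ℝ) / (1 + k) - 1) ^ 2 ∂Po(r) ≤ 3 / r + 2 * exp (-r) := by
  have hint := integrable_pow_div_ascFactorial_poissonMeasure r
  have := hint 1
  have := hint 2
  have := hint 3
  calc ∫ k, ((r : ℝ) / (1 + k) - 1) ^ 2 ∂Po(r)
      ≤ ∫ k, ((r : ℝ) ^ 2 / (k + 1).ascFactorial 2 + 3 / r * (r ^ 3 / (k + 1).ascFactorial 3) -
          2 * (r ^ 1 / (k + 1).ascFactorial 1) + 1) ∂Po(r) :=
        integral_mono_of_nonneg (.of_forall fun _ ↦ sq_nonneg _) (by fun_prop)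
          (.of_forall (sq_div_one_add_sub_one_le r))
    _ = Po(r).real (Set.Ici 2) + 3 / r * Po(r).real (Set.Ici 3) - 2 * Po(r).real (Set.Ici 1) + 1 := by
        rw [integral_add (by fun_prop) (by fun_prop), integral_sub (by fun_prop) (by fun_prop),
          integral_add (by fun_prop) (by fun_prop), integral_const_mul, integral_const_mul,
          integral_pow_div_ascFactorial_poissonMeasure, integral_pow_div_ascFactorial_poissonMeasure,
          integral_pow_div_ascFactorial_poissonMeasure, integral_const, probReal_univ, smul_eq_mul,
          mul_one]
    _ ≤ 1 + 3 / r * 1 - 2 * (1 - exp (-r)) + 1 := by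
        rw [poissonMeasure_real_Ici_one]
        gcongr <;> exact measureReal_le_one
    _ = 3 / r + 2 * exp (-r) := by ring

end ProbabilityTheory

theorem poisson_expectation_sq_tendsto_zero :
    Tendsto (fun c : NNReal =>
        ∫ k : ℕ, ((c : ℝ) / (1 + (k : ℝ)) - 1) ^ 2 ∂(poissonMeasure c))
      atTop (nhds 0) := by
  have hcoe : Tendsto (fun c : ℝ≥0 ↦ (c : ℝ)) atTop atTop := NNReal.tendsto_coe_atTop.2 tendsto_id
  have hbound : Tendsto (fun c : ℝ≥0 ↦ 3 / (c : ℝ) + 2 * exp (-c)) atTop (nhds 0) := by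
    simpa using (tendsto_const_nhds.div_atTop hcoe).add
      ((tendsto_exp_neg_atTop_nhds_zero.comp hcoe).const_mul 2)
  exact tendsto_of_tendsto_of_tendsto_of_le_of_le tendsto_const_nhds hbound
    (fun c ↦ integral_nonneg fun k ↦ sq_nonneg _) integral_sq_div_one_add_sub_one_poissonMeasure_le
end

section
/- If S is a Poisson random variable with mean c > 0, then E[(c^2/(1+S)^2 - 1)^4] → 0 as c → ∞. -/
/-!
Put `Y = c / (1 + S)`. It suffices that every moment `E[Y ^ n]` tends to `1`: then
`E[Q(Y)] → Q(1)` for every polynomial `Q`, and `Q(y) = (y ^ 2 - 1) ^ 4` vanishes at `1`.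
Since `k! * (k + 1)⋯(k + n) = (k + n)!`, we have
`P(S = k) * c ^ n / ((k + 1)⋯(k + n)) = P(S = k + n)`.
Comparing `(k + 1) ^ n` with the rising factorial `(k + 1)⋯(k + n)` from below, and
`(k + 1)⋯(k + n + 1)` with `(k + 1) ^ n * (k + 1 + C)` from above, gives
`P(S ≥ n) ≤ E[Y ^ n] ≤ P(S ≥ n) + C / c`, and `P(S ≥ n) → 1`.
-/

open Filter MeasureTheory ProbabilityTheory Finset Real Polynomial
open scoped NNReal Nat Topology

theorem Nat.exists_ascFactorial_succ_le_pow_mul (n : ℕ) :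
    ∃ C, ∀ k, (k + 1).ascFactorial (n + 1) ≤ (k + 1) ^ n * (k + 1 + C) := by
  induction n with
  | zero => exact ⟨0, fun k => by simp [Nat.ascFactorial_succ]⟩
  | succ n ih =>
    obtain ⟨C, hC⟩ := ih
    refine ⟨(C + 1) * (n + 2), fun k => ?_⟩
    calc (k + 1).ascFactorial (n + 2) = (k + 1 + (n + 1)) * (k + 1).ascFactorial (n + 1) :=
          Nat.ascFactorial_succ
      _ ≤ (k + 1 + (n + 1)) * ((k + 1) ^ n * (k + 1 + C)) := Nat.mul_le_mul_left _ (hC k)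
      _ ≤ (k + 1) ^ (n + 1) * (k + 1 + (C + 1) * (n + 2)) := by
          rw [pow_succ]
          have : (k + 1 + (n + 1)) * (k + 1 + C) ≤ (k + 1) * (k + 1 + (C + 1) * (n + 2)) := by
            nlinarith [Nat.zero_le (k * C * n), Nat.zero_le (k * C)]
          calc _ = (k + 1) ^ n * ((k + 1 + (n + 1)) * (k + 1 + C)) := by ring
            _ ≤ (k + 1) ^ n * ((k + 1) * (k + 1 + (C + 1) * (n + 2))) := by gcongr
            _ = _ := by ring

namespace ProbabilityTheory

variable (c : ℝ≥0)

lemma poissonMeasure_real_singleton_add (k n : ℕ) :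
    Po(c).real {k + n} = Po(c).real {k} * (c ^ n / (k + 1).ascFactorial n) := by
  simp only [poissonMeasure_real_singleton, ← Nat.factorial_mul_ascFactorial]
  push_cast
  field_simp
  ring

lemma hasSum_poissonMeasure_real_singleton_add (n : ℕ) :
    HasSum (fun k => Po(c).real {k + n}) (1 - ∑ j ∈ range n, Po(c).real {j}) := by
  simp only [poissonMeasure_real_singleton]
  exact (hasSum_nat_add_iff' n).mpr (hasSum_one_poissonMeasure c)

lemma tendsto_poissonMeasure_real_singleton_atTop (j : ℕ) :
    Tendsto (fun c : ℝ≥0 => Po(c).real {j}) atTop (𝓝 0) := by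
  simp only [poissonMeasure_real_singleton, mul_comm (exp _)]
  simpa using ((tendsto_pow_mul_exp_neg_atTop_nhds_zero j).comp
    (NNReal.tendsto_coe_atTop.mpr tendsto_id)).div_const (j ! : ℝ)

lemma integrable_div_one_add_pow (n : ℕ) :
    Integrable (fun k : ℕ => ((c : ℝ) / (1 + k)) ^ n) Po(c) := by
  refine Integrable.of_bound .of_discrete ((c : ℝ) ^ n) (ae_of_all _ fun k => ?_)
  rw [norm_pow, Real.norm_of_nonneg (by positivity)]
  exact pow_le_pow_left₀ (by positivity) (div_le_self c.coe_nonneg (by simp)) n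

lemma hasSum_integral_div_one_add_pow (n : ℕ) :
    HasSum (fun k : ℕ => Po(c).real {k} * ((c : ℝ) / (1 + k)) ^ n)
      (∫ k : ℕ, ((c : ℝ) / (1 + k)) ^ n ∂Po(c)) := by
  simpa [poissonMeasure_real_singleton] using
    hasSum_integral_poissonMeasure (integrable_div_one_add_pow c n)

lemma poissonMeasure_real_singleton_add_le (k n : ℕ) :
    Po(c).real {k + n} ≤ Po(c).real {k} * ((c : ℝ) / (1 + k)) ^ n := by
  rw [poissonMeasure_real_singleton_add, div_pow]
  have hpow : ((1 : ℝ) + k) ^ n ≤ (k + 1).ascFactorial n := by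
    rw [add_comm]
    exact_mod_cast Nat.pow_succ_le_ascFactorial (k + 1) n
  gcongr

lemma one_sub_sum_le_integral_div_one_add_pow (n : ℕ) :
    1 - ∑ j ∈ range n, Po(c).real {j} ≤ ∫ k : ℕ, ((c : ℝ) / (1 + k)) ^ n ∂Po(c) :=
  hasSum_le (fun k => poissonMeasure_real_singleton_add_le c k n)
    (hasSum_poissonMeasure_real_singleton_add c n) (hasSum_integral_div_one_add_pow c n)

variable {c}

lemma le_poissonMeasure_real_singleton_add (hc : 0 < c) {k n C : ℕ}
    (hC : (k + 1).ascFactorial (n + 1) ≤ (k + 1) ^ n * (k + 1 + C)) :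
    Po(c).real {k} * ((c : ℝ) / (1 + k)) ^ n ≤
      Po(c).real {k + n} + C / c * Po(c).real {k + (n + 1)} := by
  rw [poissonMeasure_real_singleton_add, poissonMeasure_real_singleton_add, mul_left_comm,
    ← mul_add]
  refine mul_le_mul_of_nonneg_left ?_ measureReal_nonneg
  have hA : ((k + 1).ascFactorial (n + 1) : ℝ) = (k + 1 + n) * (k + 1).ascFactorial n := by
    exact_mod_cast Nat.ascFactorial_succ
  have hle : ((k + 1).ascFactorial (n + 1) : ℝ) ≤ (1 + k) ^ n * (k + 1 + n + C) := by
    calc ((k + 1).ascFactorial (n + 1) : ℝ) ≤ (k + 1) ^ n * (k + 1 + C) := by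
          exact_mod_cast hC
      _ ≤ (1 + k) ^ n * (k + 1 + n + C) := by
        rw [add_comm 1 (k : ℝ)]
        have : (0 : ℝ) ≤ n := n.cast_nonneg
        gcongr _ * ?_
        linarith
  calc ((c : ℝ) / (1 + k)) ^ n = c ^ n / (1 + k) ^ n := div_pow ..
    _ ≤ c ^ n * (k + 1 + n + C) / (k + 1).ascFactorial (n + 1) := by
        rw [div_le_div_iff₀ (by positivity) (by positivity)]
        nlinarith [pow_nonneg c.coe_nonneg n]
    _ = c ^ n / (k + 1).ascFactorial n +
          C / c * (c ^ (n + 1) / (k + 1).ascFactorial (n + 1)) := by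
        rw [hA]
        field_simp
        ring

lemma integral_div_one_add_pow_le (hc : 0 < c) {n C : ℕ}
    (hC : ∀ k, (k + 1).ascFactorial (n + 1) ≤ (k + 1) ^ n * (k + 1 + C)) :
    ∫ k : ℕ, ((c : ℝ) / (1 + k)) ^ n ∂Po(c) ≤
      1 - ∑ j ∈ range n, Po(c).real {j} + C / c := by
  have tail_le_one : 1 - ∑ j ∈ range (n + 1), Po(c).real {j} ≤ 1 :=
    sub_le_self _ (sum_nonneg fun _ _ => measureReal_nonneg)
  calc _ ≤ 1 - ∑ j ∈ range n, Po(c).real {j} +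
          C / c * (1 - ∑ j ∈ range (n + 1), Po(c).real {j}) :=
        hasSum_le (fun k => le_poissonMeasure_real_singleton_add hc (hC k))
          (hasSum_integral_div_one_add_pow c n)
          ((hasSum_poissonMeasure_real_singleton_add c n).add
            ((hasSum_poissonMeasure_real_singleton_add c (n + 1)).mul_left _))
    _ ≤ _ := by
        gcongr
        exact mul_le_of_le_one_right (by positivity) tail_le_one

theorem tendsto_integral_div_one_add_pow (n : ℕ) :
    Tendsto (fun c : ℝ≥0 => ∫ k : ℕ, ((c : ℝ) / (1 + k)) ^ n ∂Po(c)) atTop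
      (𝓝 1) := by
  obtain ⟨C, hC⟩ := Nat.exists_ascFactorial_succ_le_pow_mul n
  have tail :
      Tendsto (fun c : ℝ≥0 => 1 - ∑ j ∈ range n, Po(c).real {j}) atTop (𝓝 1) := by
    have := tendsto_const_nhds (x := (1 : ℝ)).sub <|
      tendsto_finsetSum (range n) fun j _ => tendsto_poissonMeasure_real_singleton_atTop j
    rwa [sum_const_zero, sub_zero] at this
  have hinv : Tendsto (fun c : ℝ≥0 => (C : ℝ) / c) atTop (𝓝 0) :=
    tendsto_const_nhds.div_atTop (NNReal.tendsto_coe_atTop.mpr tendsto_id)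
  refine tendsto_of_tendsto_of_tendsto_of_le_of_le' tail
    (by simpa only [add_zero] using tail.add hinv)
    (.of_forall fun c => one_sub_sum_le_integral_div_one_add_pow c n) ?_
  filter_upwards [eventually_gt_atTop 0] with c hc using integral_div_one_add_pow_le hc hC

theorem tendsto_integral_eval_div_one_add (P : ℝ[X]) :
    Tendsto (fun c : ℝ≥0 => ∫ k : ℕ, P.eval ((c : ℝ) / (1 + k)) ∂Po(c)) atTop
      (𝓝 (P.eval 1)) := by
  have hsum (c : ℝ≥0) : ∫ k : ℕ, P.eval ((c : ℝ) / (1 + k)) ∂Po(c) =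
      ∑ i ∈ range (P.natDegree + 1),
        P.coeff i * ∫ k : ℕ, ((c : ℝ) / (1 + k)) ^ i ∂Po(c) := by
    simp_rw [eval_eq_sum_range, ← integral_const_mul]
    exact integral_finsetSum _ fun i _ => (integrable_div_one_add_pow c i).const_mul _
  rw [funext hsum, eval_eq_sum_range]
  simpa only [one_pow, mul_one] using tendsto_finsetSum (range (P.natDegree + 1))
    fun i _ => (tendsto_integral_div_one_add_pow i).const_mul (P.coeff i)

end ProbabilityTheory

theorem poisson_expectation_pow4_tendsto_zero :
    Tendsto (fun c : NNReal =>
        ∫ k : ℕ, ((c : ℝ) ^ 2 / (1 + (k : ℝ)) ^ 2 - 1) ^ 4 ∂(poissonMeasure c))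
      atTop (nhds 0) := by
  have h := tendsto_integral_eval_div_one_add ((X ^ 2 - 1) ^ 4 : ℝ[X])
  norm_num [div_pow] at h
  exact h
end

section
/- Let W and B be correlated standard Brownian motions with correlation coefficient ρ, and μ a memory kernel with cumulative M. Then E[∫_0^t B(s)^2 μ(s) ds · ∫_0^t W(s)^2 μ(s) ds] = (∫_0^t M(s)ds)^2 - 2 t M(t) ∫_0^t M(s)ds + (1+2ρ^2) t^2 M(t)^2 - 8ρ^2 M(t) ∫_0^t s M(s) ds + 4ρ^2 ∫_0^t s M(s)^2 ds. -/
open Filter MeasureTheory ProbabilityTheory intervalIntegral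

/-- A (one-dimensional) standard Brownian motion on a probability space `Ω`:
continuous paths starting from `0`, Gaussian increments `W t - W s ~ N(0, t - s)`,
and independent increments. -/
structure IsStdBrownian {Ω : Type*} [MeasureSpace Ω]
    [IsProbabilityMeasure (ℙ : Measure Ω)] (W : ℝ → Ω → ℝ) : Prop where
  measurable : ∀ t : ℝ, Measurable (W t)
  init : ∀ ω, W 0 ω = 0
  cont_paths : ∀ ω, Continuous fun t => W t ω
  gauss_incr : ∀ s t : ℝ, 0 ≤ s → s ≤ t →
    Measure.map (fun ω => W t ω - W s ω) ℙ = gaussianReal 0 (Real.toNNReal (t - s))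
  indep_incr : ∀ (n : ℕ) (t : ℕ → ℝ), Monotone t → 0 ≤ t 0 →
    iIndepFun
      (fun i : Fin n => fun ω => W (t (i + 1)) ω - W (t i) ω) ℙ

/-- Two processes are jointly Gaussian (and centred) if every finite linear combination
of their values at nonnegative times has a centred Gaussian distribution. -/
def JointlyGaussianPair {Ω : Type*} [MeasureSpace Ω]
    [IsProbabilityMeasure (ℙ : Measure Ω)] (W B : ℝ → Ω → ℝ) : Prop :=
  ∀ (n : ℕ) (a b t s : Fin n → ℝ), (∀ i, 0 ≤ t i) → (∀ i, 0 ≤ s i) →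
    ∃ v : NNReal, Measure.map
      (fun ω => ∑ i, (a i * W (t i) ω + b i * B (s i) ω)) ℙ = gaussianReal 0 v

/-!
By Fubini, the expectation equals `∫∫ μ(s) μ(u) E[B(s)² W(u)²] ds du` over `(0, t]²`, and the
Isserlis formula for the centred Gaussian pair `(B(s), W(u))` gives
`E[B(s)² W(u)²] = s u + 2 ρ² min(s, u)²`. The two kernel integrals are then computed by writing
`s = ∫₀ᵗ 1{x ≤ s} dx` and `min(s, u)² = ∫₀ᵗ 2x 1{x ≤ s} 1{x ≤ u} dx` and integrating in `s, u`
first: `∫₀ᵗ s μ(s) ds = ∫₀ᵗ (M t - M x) dx` and `∫∫ μ(s) μ(u) min(s, u)² = ∫₀ᵗ 2x (M t - M x)² dx`.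
-/

open Set Real
open scoped NNReal

namespace ProbabilityTheory

lemma integrable_pow_gaussianReal (m : ℝ) (v : ℝ≥0) (n : ℕ) :
    Integrable (fun x => x ^ n) (gaussianReal m v) := by
  rw [← integrable_norm_iff (by fun_prop)]
  simpa only [norm_pow, id] using (memLp_id_gaussianReal (μ := m) (v := v) n).integrable_norm_pow'

lemma integrable_gaussianReal_iff {m : ℝ} {v : ℝ≥0} (hv : v ≠ 0) {f : ℝ → ℝ} :
    Integrable f (gaussianReal m v) ↔ Integrable fun x => f x * gaussianPDFReal m v x := by
  rw [gaussianReal_of_var_ne_zero m hv, integrable_withDensity_iff_integrable_smul'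
    (measurable_gaussianPDF m v) (ae_of_all _ fun _ => gaussianPDF_lt_top)]
  simp only [toReal_gaussianPDF, smul_eq_mul, mul_comm]

lemma hasDerivAt_gaussianPDFReal (m : ℝ) (v : ℝ≥0) (x : ℝ) :
    HasDerivAt (gaussianPDFReal m v) (-((x - m) / v) * gaussianPDFReal m v x) x := by
  have h : HasDerivAt (fun y => -(y - m) ^ 2 / (2 * v)) (-(2 * (x - m)) / (2 * v)) x :=
    ((((hasDerivAt_id x).sub_const m).fun_pow 2).fun_neg.div_const _).congr_deriv (by simp)
  rw [gaussianPDFReal_def]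
  refine (h.exp.const_mul (√(2 * π * v))⁻¹).congr_deriv ?_
  rcases eq_or_ne (v : ℝ) 0 with hv | hv
  · simp [hv]
  · field_simp

lemma integral_pow_add_two_gaussianReal (v : ℝ≥0) (n : ℕ) :
    ∫ x, x ^ (n + 2) ∂gaussianReal 0 v = (n + 1) * v * ∫ x, x ^ n ∂gaussianReal 0 v := by
  rcases eq_or_ne v 0 with rfl | hv
  · simp
  set φ := gaussianPDFReal 0 v
  have hint (k : ℕ) : Integrable fun x : ℝ => x ^ k * φ x :=
    (integrable_gaussianReal_iff hv).1 (integrable_pow_gaussianReal 0 v k)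
  -- Stein's identity: integrate `x ^ (n + 1)` by parts against the density `φ`.
  have parts := integral_mul_deriv_eq_deriv_mul_of_integrable
    (u := fun x : ℝ => x ^ (n + 1)) (u' := fun x => (n + 1) * x ^ n)
    (v := φ) (v' := fun x => -(x / v) * φ x)
    (fun x _ => by simpa using hasDerivAt_pow (n + 1) x)
    (fun x _ => by simpa using hasDerivAt_gaussianPDFReal 0 v x)
    (((hint (n + 2)).div_const (-(v : ℝ))).congr (ae_of_all _ fun x => by
      simp only [Pi.mul_apply]; field_simp; ring))
    (((hint n).const_mul (n + 1)).congr (ae_of_all _ fun x => by simp only [Pi.mul_apply]; ring))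
    (hint (n + 1))
  rw [show (fun x => x ^ (n + 1) * (-(x / v) * φ x)) = fun x => -(v : ℝ)⁻¹ * (φ x * x ^ (n + 2))
      by ext x; field_simp; ring,
    show (fun x => (n + 1) * x ^ n * φ x) = fun x => ((n : ℝ) + 1) * (φ x * x ^ n) by ext x; ring,
    MeasureTheory.integral_const_mul, MeasureTheory.integral_const_mul] at parts
  simp only [integral_gaussianReal_eq_integral_smul hv, smul_eq_mul]
  field_simp at parts
  linear_combination -parts

lemma integral_sq_gaussianReal (v : ℝ≥0) : ∫ x, x ^ 2 ∂gaussianReal 0 v = v := by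
  simpa using integral_pow_add_two_gaussianReal v 0

lemma integral_pow_four_gaussianReal (v : ℝ≥0) : ∫ x, x ^ 4 ∂gaussianReal 0 v = 3 * v ^ 2 := by
  rw [integral_pow_add_two_gaussianReal v 2, integral_sq_gaussianReal]
  ring

section Law

variable {Ω : Type*} [MeasurableSpace Ω] {P : Measure Ω} {Z : Ω → ℝ} {m : ℝ} {v : ℝ≥0}

lemma aemeasurable_of_map_eq_gaussianReal (h : P.map Z = gaussianReal m v) : AEMeasurable Z P :=
  AEMeasurable.of_map_ne_zero (h ▸ IsProbabilityMeasure.ne_zero _)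

lemma integrable_pow_of_map_eq_gaussianReal (h : P.map Z = gaussianReal m v) (n : ℕ) :
    Integrable (fun ω => Z ω ^ n) P :=
  (integrable_map_measure (continuous_pow n).aestronglyMeasurable
    (aemeasurable_of_map_eq_gaussianReal h)).1 (h ▸ integrable_pow_gaussianReal m v n)

lemma integral_pow_of_map_eq_gaussianReal (h : P.map Z = gaussianReal m v) (n : ℕ) :
    ∫ ω, Z ω ^ n ∂P = ∫ x, x ^ n ∂gaussianReal m v := by
  rw [← h, integral_map (aemeasurable_of_map_eq_gaussianReal h) (by fun_prop)]

lemma integral_pow_four_of_map_eq_gaussianReal (h : P.map Z = gaussianReal 0 v) :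
    ∫ ω, Z ω ^ 4 ∂P = 3 * (∫ ω, Z ω ^ 2 ∂P) ^ 2 := by
  rw [integral_pow_of_map_eq_gaussianReal h, integral_pow_of_map_eq_gaussianReal h,
    integral_pow_four_gaussianReal, integral_sq_gaussianReal]

end Law

section Isserlis

variable {Ω : Type*} [MeasurableSpace Ω] {P : Measure Ω} {X Y : Ω → ℝ}

lemma integrable_sq_mul_sq_of_gaussian
    (h : ∀ a b : ℝ, ∃ v : ℝ≥0, P.map (fun ω => a * X ω + b * Y ω) = gaussianReal 0 v) :
    Integrable (fun ω => X ω ^ 2 * Y ω ^ 2) P := by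
  have hint (a b : ℝ) : Integrable (fun ω => (a * X ω + b * Y ω) ^ 4) P :=
    integrable_pow_of_map_eq_gaussianReal (h a b).choose_spec 4
  refine ((((hint 1 1).add (hint 1 (-1))).sub ((hint 1 0).const_mul 2)).sub
    ((hint 0 1).const_mul 2)).div_const 12 |>.congr (ae_of_all _ fun ω => ?_)
  simp only [Pi.add_apply, Pi.sub_apply]
  ring

lemma integral_sq_mul_sq_of_gaussian
    (h : ∀ a b : ℝ, ∃ v : ℝ≥0, P.map (fun ω => a * X ω + b * Y ω) = gaussianReal 0 v) :
    ∫ ω, X ω ^ 2 * Y ω ^ 2 ∂P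
      = (∫ ω, X ω ^ 2 ∂P) * (∫ ω, Y ω ^ 2 ∂P) + 2 * (∫ ω, X ω * Y ω ∂P) ^ 2 := by
  set q : ℝ → ℝ → ℝ := fun a b => ∫ ω, (a * X ω + b * Y ω) ^ 2 ∂P
  have hint (a b : ℝ) (n : ℕ) : Integrable (fun ω => (a * X ω + b * Y ω) ^ n) P :=
    integrable_pow_of_map_eq_gaussianReal (h a b).choose_spec n
  have hfour (a b : ℝ) : ∫ ω, (a * X ω + b * Y ω) ^ 4 ∂P = 3 * q a b ^ 2 :=
    integral_pow_four_of_map_eq_gaussianReal (h a b).choose_spec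
  have hX : q 1 0 = ∫ ω, X ω ^ 2 ∂P := by simp [q]
  have hY : q 0 1 = ∫ ω, Y ω ^ 2 ∂P := by simp [q]
  have parallelogram : q 1 1 + q 1 (-1) = 2 * q 1 0 + 2 * q 0 1 := by
    rw [← integral_add (hint 1 1 2) (hint 1 (-1) 2), ← MeasureTheory.integral_const_mul,
      ← MeasureTheory.integral_const_mul,
      ← integral_add ((hint 1 0 2).const_mul 2) ((hint 0 1 2).const_mul 2)]
    congr 1 with ω
    ring
  have polarization : q 1 1 - q 1 (-1) = 4 * ∫ ω, X ω * Y ω ∂P := by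
    rw [← integral_sub (hint 1 1 2) (hint 1 (-1) 2), ← MeasureTheory.integral_const_mul]
    congr 1 with ω
    ring
  -- `12 X² Y²` is a combination of fourth powers of the Gaussian variables `X ± Y`, `X`, `Y`.
  have wick : 12 * ∫ ω, X ω ^ 2 * Y ω ^ 2 ∂P
      = 3 * q 1 1 ^ 2 + 3 * q 1 (-1) ^ 2 - 6 * q 1 0 ^ 2 - 6 * q 0 1 ^ 2 := by
    rw [← MeasureTheory.integral_const_mul]
    calc ∫ ω, 12 * (X ω ^ 2 * Y ω ^ 2) ∂P
        = ∫ ω, ((1 * X ω + 1 * Y ω) ^ 4 + (1 * X ω + -1 * Y ω) ^ 4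
            - 2 * (1 * X ω + 0 * Y ω) ^ 4 - 2 * (0 * X ω + 1 * Y ω) ^ 4) ∂P := by
          congr 1 with ω
          ring
      _ = _ := by
          rw [MeasureTheory.integral_sub, MeasureTheory.integral_sub, MeasureTheory.integral_add,
            MeasureTheory.integral_const_mul, MeasureTheory.integral_const_mul,
            hfour, hfour, hfour, hfour]
          · ring
          all_goals fun_prop
  rw [← hX, ← hY]
  linear_combination (wick + 3 / 2 * (q 1 1 + q 1 (-1) + 2 * q 1 0 + 2 * q 0 1) * parallelogram
    + 3 / 2 * (q 1 1 - q 1 (-1) + 4 * ∫ ω, X ω * Y ω ∂P) * polarization) / 12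

end Isserlis

end ProbabilityTheory

section Brownian

variable {Ω : Type*} [MeasureSpace Ω] [IsProbabilityMeasure (ℙ : Measure Ω)] {W B : ℝ → Ω → ℝ}

lemma IsStdBrownian.map_eq_gaussianReal (hW : IsStdBrownian W) {s : ℝ} (hs : 0 ≤ s) :
    (ℙ : Measure Ω).map (W s) = gaussianReal 0 s.toNNReal := by
  simpa [hW.init] using hW.gauss_incr 0 s le_rfl hs

lemma IsStdBrownian.integral_sq (hW : IsStdBrownian W) {s : ℝ} (hs : 0 ≤ s) :
    ∫ ω, W s ω ^ 2 = s := by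
  rw [integral_pow_of_map_eq_gaussianReal (hW.map_eq_gaussianReal hs), integral_sq_gaussianReal,
    Real.coe_toNNReal _ hs]

lemma IsStdBrownian.measurable_uncurry (hW : IsStdBrownian W) :
    Measurable (Function.uncurry W) :=
  measurable_uncurry_of_continuous_of_measurable hW.cont_paths hW.measurable

lemma JointlyGaussianPair.map_eq_gaussianReal (h : JointlyGaussianPair W B) {s u : ℝ}
    (hs : 0 ≤ s) (hu : 0 ≤ u) (a b : ℝ) :
    ∃ v : ℝ≥0, (ℙ : Measure Ω).map (fun ω => a * B s ω + b * W u ω) = gaussianReal 0 v := by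
  simpa [add_comm] using h 1 (fun _ => b) (fun _ => a) (fun _ => u) (fun _ => s)
    (fun _ => hu) (fun _ => hs)

lemma integral_sq_mul_sq_of_correlated {ρ : ℝ} (hW : IsStdBrownian W) (hB : IsStdBrownian B)
    (hjoint : JointlyGaussianPair W B)
    (hcov : ∀ s u : ℝ, 0 ≤ s → 0 ≤ u → ∫ ω, W s ω * B u ω = ρ * min s u)
    {s u : ℝ} (hs : 0 ≤ s) (hu : 0 ≤ u) :
    ∫ ω, B s ω ^ 2 * W u ω ^ 2 = s * u + 2 * ρ ^ 2 * min s u ^ 2 := by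
  have hcross : ∫ ω, B s ω * W u ω = ρ * min s u := by
    simpa only [mul_comm, min_comm] using hcov u s hu hs
  rw [integral_sq_mul_sq_of_gaussian (hjoint.map_eq_gaussianReal hs hu), hB.integral_sq hs,
    hW.integral_sq hu, hcross]
  ring

end Brownian

lemma integral_mul_integral_Ioc_swap {α : Type*} [MeasurableSpace α] {ν : Measure α} [SFinite ν]
    {t : ℝ} {F : α → ℝ} (hF : Integrable F ν) {m : α → ℝ} (hm : Measurable m)
    (hmt : ∀ᵐ a ∂ν, m a ≤ t) {h : ℝ → ℝ} (hh : IntegrableOn h (Ioc 0 t)) :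
    ∫ a, F a * (∫ x in Ioc 0 (m a), h x) ∂ν
      = ∫ x in Ioc 0 t, h x * ∫ a in {a | x ≤ m a}, F a ∂ν := by
  set G : α → ℝ → ℝ := fun a x =>
    {p : α × ℝ | p.2 ≤ m p.1}.indicator (fun p => F p.1 * h p.2) (a, x)
  have hG : Integrable (Function.uncurry G) (ν.prod (volume.restrict (Ioc 0 t))) :=
    (hF.mul_prod hh).indicator (measurableSet_le measurable_snd (hm.comp measurable_fst))
  have inner_x : ∀ᵐ a ∂ν, ∫ x in Ioc 0 t, G a x = F a * ∫ x in Ioc 0 (m a), h x := by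
    filter_upwards [hmt] with a ha
    have hGa : G a = (Iic (m a)).indicator fun x => F a * h x := by
      ext x
      simp [G, indicator_apply]
    rw [hGa, setIntegral_indicator measurableSet_Iic, Ioc_inter_Iic, min_eq_right ha,
      MeasureTheory.integral_const_mul]
  have inner_a (x : ℝ) : ∫ a, G a x ∂ν = h x * ∫ a in {a | x ≤ m a}, F a ∂ν := by
    have hGx : (fun a => G a x) = {a | x ≤ m a}.indicator fun a => h x * F a := by
      ext a
      simp [G, indicator_apply, mul_comm]
    rw [hGx, MeasureTheory.integral_indicator (measurableSet_le measurable_const hm),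
      MeasureTheory.integral_const_mul]
  rw [integral_congr_ae (inner_x.mono fun a ha => ha.symm), integral_integral_swap hG]
  exact integral_congr_ae (ae_of_all _ inner_a)

section Kernel

variable {μ M : ℝ → ℝ} {t : ℝ}

lemma volume_restrict_Ioc_prod_Ioc :
    volume.restrict (Ioc 0 t ×ˢ Ioc 0 t)
      = (volume.restrict (Ioc (0 : ℝ) t)).prod (volume.restrict (Ioc 0 t)) := by
  rw [Measure.volume_eq_prod, Measure.prod_restrict]

lemma ae_mem_Ioc_prod_Ioc :
    ∀ᵐ p ∂(volume.restrict (Ioc (0 : ℝ) t)).prod (volume.restrict (Ioc 0 t)),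
      p ∈ Ioc 0 t ×ˢ Ioc 0 t := by
  rw [← volume_restrict_Ioc_prod_Ioc]
  exact ae_restrict_mem (measurableSet_Ioc.prod measurableSet_Ioc)

lemma integrableOn_mul_mul_of_continuous (hμ : IntegrableOn μ (Ioc 0 t)) {g : ℝ × ℝ → ℝ}
    (hg : Continuous g) :
    IntegrableOn (fun p => μ p.1 * μ p.2 * g p) (Ioc 0 t ×ˢ Ioc 0 t) := by
  obtain ⟨C, hC⟩ := (isCompact_Icc.prod isCompact_Icc).exists_bound_of_continuousOn
    (s := Icc 0 t ×ˢ Icc 0 t) hg.continuousOn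
  have hμμ : IntegrableOn (fun p : ℝ × ℝ => μ p.1 * μ p.2) (Ioc 0 t ×ˢ Ioc 0 t) := by
    rw [IntegrableOn, volume_restrict_Ioc_prod_Ioc]
    exact hμ.mul_prod hμ
  refine hμμ.mul_bdd (c := C) hg.aestronglyMeasurable ?_
  filter_upwards [ae_restrict_mem (measurableSet_Ioc.prod measurableSet_Ioc)] with p hp
  exact hC p ⟨Ioc_subset_Icc_self hp.1, Ioc_subset_Icc_self hp.2⟩

lemma integral_mul_mul_add_min_sq (hμ : IntegrableOn μ (Ioc 0 t)) (c : ℝ) :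
    ∫ p in Ioc 0 t ×ˢ Ioc 0 t, μ p.1 * μ p.2 * (p.1 * p.2 + c * min p.1 p.2 ^ 2)
      = (∫ s in Ioc 0 t, s * μ s) ^ 2
        + c * ∫ p in Ioc 0 t ×ˢ Ioc 0 t, μ p.1 * μ p.2 * min p.1 p.2 ^ 2 := by
  have h1 := integrableOn_mul_mul_of_continuous hμ (g := fun p => p.1 * p.2) (by fun_prop)
  have h2 := integrableOn_mul_mul_of_continuous hμ (g := fun p => min p.1 p.2 ^ 2) (by fun_prop)
  have hprod : ∫ p in Ioc 0 t ×ˢ Ioc 0 t, μ p.1 * μ p.2 * (p.1 * p.2)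
      = (∫ s in Ioc 0 t, s * μ s) ^ 2 := by
    rw [volume_restrict_Ioc_prod_Ioc, sq, ← integral_prod_mul]
    congr 1 with p
    ring
  rw [← hprod, ← MeasureTheory.integral_const_mul,
    ← MeasureTheory.integral_add h1 (h2.const_mul c)]
  congr 1 with p
  ring

lemma continuousOn_Icc_of_eq_primitive (hμ : IntegrableOn μ (Ioc 0 t))
    (hM : ∀ x, M x = ∫ s in 0..x, μ s) : ContinuousOn M (Icc 0 t) := by
  rcases le_or_gt 0 t with ht | ht
  · rw [show M = _ from funext hM, ← uIcc_of_le ht]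
    exact intervalIntegral.continuousOn_primitive_interval'
      ((intervalIntegrable_iff_integrableOn_Ioc_of_le ht).2 hμ) left_mem_uIcc
  · simp [Icc_eq_empty_of_lt ht]

lemma setIntegral_Ici_restrict_Ioc (hμ : IntegrableOn μ (Ioc 0 t))
    (hM : ∀ x, M x = ∫ s in 0..x, μ s) {x : ℝ} (hx : x ∈ Ioc 0 t) :
    ∫ s in Ici x, μ s ∂(volume.restrict (Ioc 0 t)) = M t - M x := by
  have hIcc : Ici x ∩ Ioc 0 t = Icc x t := by
    ext s
    simp only [mem_inter_iff, mem_Ici, mem_Ioc, mem_Icc]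
    grind [hx.1]
  have hint : ∀ y ∈ Icc 0 t, IntervalIntegrable μ volume 0 y := fun y hy =>
    (intervalIntegrable_iff_integrableOn_Ioc_of_le hy.1).2
      (hμ.mono_set (Ioc_subset_Ioc_right hy.2))
  rw [Measure.restrict_restrict measurableSet_Ici, hIcc, integral_Icc_eq_integral_Ioc,
    ← intervalIntegral.integral_of_le hx.2, hM, hM,
    intervalIntegral.integral_interval_sub_left (hint t ⟨hx.1.le.trans hx.2, le_rfl⟩)
      (hint x ⟨hx.1.le, hx.2⟩)]

lemma integral_id_mul_eq_sub_integral (hμ : IntegrableOn μ (Ioc 0 t))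
    (hM : ∀ x, M x = ∫ s in 0..x, μ s) (ht : 0 ≤ t) :
    ∫ s in Ioc 0 t, s * μ s = t * M t - ∫ x in Ioc 0 t, M x := by
  have h := integral_mul_integral_Ioc_swap hμ measurable_id
    (ae_restrict_of_forall_mem measurableSet_Ioc fun s hs => hs.2)
    (integrableOn_const (C := (1 : ℝ)) measure_Ioc_lt_top.ne)
  simp only [id, one_mul] at h
  have hMint : IntegrableOn M (Ioc 0 t) :=
    (continuousOn_Icc_of_eq_primitive hμ hM).integrableOn_Icc.mono_set Ioc_subset_Icc_self
  calc ∫ s in Ioc 0 t, s * μ s = ∫ s in Ioc 0 t, μ s * ∫ _ in Ioc 0 s, (1 : ℝ) :=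
        setIntegral_congr_fun measurableSet_Ioc fun s hs => by
          simp [Real.volume_real_Ioc_of_le hs.1.le, mul_comm]
    _ = ∫ x in Ioc 0 t, (M t - M x) := by
      rw [h]
      exact setIntegral_congr_fun measurableSet_Ioc fun x hx =>
        setIntegral_Ici_restrict_Ioc hμ hM hx
    _ = t * M t - ∫ x in Ioc 0 t, M x := by
      rw [MeasureTheory.integral_sub (integrableOn_const measure_Ioc_lt_top.ne).integrable hMint,
        setIntegral_const, Real.volume_real_Ioc_of_le ht, sub_zero, smul_eq_mul]

lemma integral_mul_mul_min_sq_eq (hμ : IntegrableOn μ (Ioc 0 t))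
    (hM : ∀ x, M x = ∫ s in 0..x, μ s) :
    ∫ p in Ioc 0 t ×ˢ Ioc 0 t, μ p.1 * μ p.2 * min p.1 p.2 ^ 2
      = ∫ x in Ioc 0 t, 2 * x * (M t - M x) ^ 2 := by
  set ν := volume.restrict (Ioc (0 : ℝ) t)
  have h := integral_mul_integral_Ioc_swap (hμ.mul_prod hμ) (measurable_fst.min measurable_snd)
    (ae_mem_Ioc_prod_Ioc.mono fun p hp => min_le_of_left_le hp.1.2)
    (h := fun x => 2 * x) (by fun_prop : Continuous fun x : ℝ => 2 * x).integrableOn_Ioc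
  rw [volume_restrict_Ioc_prod_Ioc]
  calc ∫ p, μ p.1 * μ p.2 * min p.1 p.2 ^ 2 ∂(ν.prod ν)
      = ∫ p, μ p.1 * μ p.2 * (∫ x in Ioc 0 (min p.1 p.2), 2 * x) ∂(ν.prod ν) := by
        refine integral_congr_ae (ae_mem_Ioc_prod_Ioc.mono fun p hp => ?_)
        dsimp only
        rw [← intervalIntegral.integral_of_le (le_min hp.1.1.le hp.2.1.le),
          intervalIntegral.integral_const_mul, integral_id]
        ring
    _ = ∫ x in Ioc 0 t, 2 * x * (M t - M x) ^ 2 := by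
      rw [h]
      refine setIntegral_congr_fun measurableSet_Ioc fun x hx => ?_
      have hset : {p : ℝ × ℝ | x ≤ min p.1 p.2} = Ici x ×ˢ Ici x := by
        ext p
        simp only [mem_ofPred_eq, mem_prod, mem_Ici, le_min_iff]
      rw [hset, ← Measure.prod_restrict, integral_prod_mul (f := μ) (g := μ),
        setIntegral_Ici_restrict_Ioc hμ hM hx, sq]

lemma integral_two_mul_mul_sub_sq (ht : 0 ≤ t) (hM : ContinuousOn M (Icc 0 t)) :
    ∫ x in Ioc 0 t, 2 * x * (M t - M x) ^ 2
      = t ^ 2 * M t ^ 2 - 4 * M t * (∫ x in Ioc 0 t, x * M x)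
        + 2 * ∫ x in Ioc 0 t, x * M x ^ 2 := by
  have hint (f : ℝ → ℝ) (hf : ContinuousOn f (Icc 0 t)) : IntegrableOn f (Ioc 0 t) :=
    hf.integrableOn_Icc.mono_set Ioc_subset_Icc_self
  have h1 := hint (fun x => 2 * M t ^ 2 * x) (by fun_prop)
  have h2 := hint (fun x => 4 * M t * (x * M x)) (by fun_prop)
  have h3 := hint (fun x => 2 * (x * M x ^ 2)) (by fun_prop)
  have hid : ∫ x in Ioc 0 t, x = t ^ 2 / 2 := by
    rw [← intervalIntegral.integral_of_le ht, integral_id]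
    ring
  calc ∫ x in Ioc 0 t, 2 * x * (M t - M x) ^ 2
      = ∫ x in Ioc 0 t, (2 * M t ^ 2 * x - 4 * M t * (x * M x) + 2 * (x * M x ^ 2)) := by
        congr 1 with x
        ring
    _ = _ := by
        rw [MeasureTheory.integral_add (by exact h1.sub h2) h3, MeasureTheory.integral_sub h1 h2,
          MeasureTheory.integral_const_mul, MeasureTheory.integral_const_mul,
          MeasureTheory.integral_const_mul, hid]
        ring

end Kernel

lemma integral_memorised_sq_mul_memorised_sq {Ω : Type*} [MeasureSpace Ω]
    [IsProbabilityMeasure (ℙ : Measure Ω)] {W B : ℝ → Ω → ℝ} {ρ : ℝ} {μ : ℝ → ℝ} {t : ℝ}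
    (hW : IsStdBrownian W) (hB : IsStdBrownian B) (hjoint : JointlyGaussianPair W B)
    (hcov : ∀ s u : ℝ, 0 ≤ s → 0 ≤ u → ∫ ω, W s ω * B u ω = ρ * min s u)
    (hμ : IntegrableOn μ (Ioc 0 t)) :
    ∫ ω, (∫ s in Ioc 0 t, B s ω ^ 2 * μ s) * (∫ s in Ioc 0 t, W s ω ^ 2 * μ s)
      = ∫ p in Ioc 0 t ×ˢ Ioc 0 t,
          μ p.1 * μ p.2 * (p.1 * p.2 + 2 * ρ ^ 2 * min p.1 p.2 ^ 2) := by
  set ν := volume.restrict (Ioc (0 : ℝ) t)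
  set K : ℝ × ℝ → ℝ := fun p => μ p.1 * μ p.2 * (p.1 * p.2 + 2 * ρ ^ 2 * min p.1 p.2 ^ 2)
  set F : Ω → ℝ × ℝ → ℝ := fun ω p => B p.1 ω ^ 2 * μ p.1 * (W p.2 ω ^ 2 * μ p.2)
  have hK : Integrable K (ν.prod ν) :=
    volume_restrict_Ioc_prod_Ioc ▸ integrableOn_mul_mul_of_continuous hμ (by fun_prop)
  have hF : AEStronglyMeasurable (Function.uncurry F) ((ℙ : Measure Ω).prod (ν.prod ν)) := by
    have hBm : Measurable fun q : Ω × (ℝ × ℝ) => B q.2.1 q.1 :=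
      hB.measurable_uncurry.comp (measurable_snd.fst.prodMk measurable_fst)
    have hWm : Measurable fun q : Ω × (ℝ × ℝ) => W q.2.2 q.1 :=
      hW.measurable_uncurry.comp (measurable_snd.snd.prodMk measurable_fst)
    exact ((hBm.pow_const 2).aestronglyMeasurable.mul
        hμ.aestronglyMeasurable.comp_fst.comp_snd).mul
      ((hWm.pow_const 2).aestronglyMeasurable.mul hμ.aestronglyMeasurable.comp_snd.comp_snd)
  have hsec : ∀ᵐ p ∂(ν.prod ν),
      Integrable (F · p) ℙ ∧ ∫ ω, F ω p = K p ∧ ∫ ω, ‖F ω p‖ = ‖K p‖ := by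
    filter_upwards [ae_mem_Ioc_prod_Ioc] with p hp
    have hs : 0 ≤ p.1 := hp.1.1.le
    have hu : 0 ≤ p.2 := hp.2.1.le
    have hFp : (F · p) = fun ω => μ p.1 * μ p.2 * (B p.1 ω ^ 2 * W p.2 ω ^ 2) := by
      ext
      ring
    have hFn : (fun ω => ‖F ω p‖) = fun ω => |μ p.1 * μ p.2| * (B p.1 ω ^ 2 * W p.2 ω ^ 2) := by
      ext
      simp only [F, Real.norm_eq_abs, abs_mul, abs_pow, sq_abs]
      ring
    have hE := integral_sq_mul_sq_of_correlated hW hB hjoint hcov hs hu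
    refine ⟨hFp ▸ (integrable_sq_mul_sq_of_gaussian
      (hjoint.map_eq_gaussianReal hs hu)).const_mul _, ?_, ?_⟩
    · rw [hFp, MeasureTheory.integral_const_mul, hE]
    · rw [hFn, MeasureTheory.integral_const_mul, hE, Real.norm_eq_abs, abs_mul (μ p.1 * μ p.2),
        abs_of_nonneg (by positivity : 0 ≤ p.1 * p.2 + 2 * ρ ^ 2 * min p.1 p.2 ^ 2)]
  have hFint : Integrable (Function.uncurry F) ((ℙ : Measure Ω).prod (ν.prod ν)) :=
    (integrable_prod_iff' hF).2
      ⟨hsec.mono fun p hp => hp.1, hK.norm.congr (hsec.mono fun p hp => hp.2.2.symm)⟩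
  rw [volume_restrict_Ioc_prod_Ioc]
  calc ∫ ω, (∫ s, B s ω ^ 2 * μ s ∂ν) * (∫ s, W s ω ^ 2 * μ s ∂ν)
      = ∫ ω, ∫ p, F ω p ∂(ν.prod ν) := by
        congr 1 with ω
        exact (integral_prod_mul (fun s => B s ω ^ 2 * μ s) (fun s => W s ω ^ 2 * μ s)).symm
    _ = ∫ p, (∫ ω, F ω p) ∂(ν.prod ν) := integral_integral_swap hFint
    _ = ∫ p, K p ∂(ν.prod ν) := integral_congr_ae (hsec.mono fun p hp => hp.2.1)

theorem correlated_bm_memorised_cross_moment_general {Ω : Type*} [MeasureSpace Ω]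
    [IsProbabilityMeasure (ℙ : Measure Ω)] (W B : ℝ → Ω → ℝ)
    (hW : IsStdBrownian W) (hB : IsStdBrownian B)
    (hjoint : JointlyGaussianPair W B)
    (ρ : ℝ)
    (hcov : ∀ s u : ℝ, 0 ≤ s → 0 ≤ u → ∫ ω, W s ω * B u ω ∂ℙ = ρ * min s u)
    (μ M : ℝ → ℝ)
    (hμ_anti : AntitoneOn μ (Set.Ici 0))
    (hM : ∀ t, M t = ∫ s in (0:ℝ)..t, μ s)
    (t : ℝ) (ht : 0 ≤ t) :
    (∫ ω, (∫ s in (0:ℝ)..t, (B s ω) ^ 2 * μ s) * (∫ s in (0:ℝ)..t, (W s ω) ^ 2 * μ s) ∂ℙ) =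
      (∫ s in (0:ℝ)..t, M s) ^ 2 - 2 * t * M t * (∫ s in (0:ℝ)..t, M s)
        + (1 + 2 * ρ ^ 2) * t ^ 2 * (M t) ^ 2
        - 8 * ρ ^ 2 * M t * (∫ s in (0:ℝ)..t, s * M s)
        + 4 * ρ ^ 2 * (∫ s in (0:ℝ)..t, s * (M s) ^ 2) := by
  have hμ : IntegrableOn μ (Ioc 0 t) :=
    ((hμ_anti.mono Icc_subset_Ici_self).integrableOn_isCompact isCompact_Icc).mono_set
      Ioc_subset_Icc_self
  simp only [intervalIntegral.integral_of_le ht]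
  rw [integral_memorised_sq_mul_memorised_sq hW hB hjoint hcov hμ, integral_mul_mul_add_min_sq hμ,
    integral_id_mul_eq_sub_integral hμ hM ht, integral_mul_mul_min_sq_eq hμ hM,
    integral_two_mul_mul_sub_sq ht (continuousOn_Icc_of_eq_primitive hμ hM)]
  ring

/-- Cross moment of the memorised squares of two correlated Brownian motions. -/
theorem correlated_bm_memorised_cross_moment {Ω : Type*} [MeasureSpace Ω]
    [IsProbabilityMeasure (ℙ : Measure Ω)] (W B : ℝ → Ω → ℝ)
    (hW : IsStdBrownian W) (hB : IsStdBrownian B)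
    (hjoint : JointlyGaussianPair W B)
    (ρ : ℝ) (hρ : ρ ∈ Set.Icc (-1 : ℝ) 1)
    (hcov : ∀ s u : ℝ, 0 ≤ s → 0 ≤ u → ∫ ω, W s ω * B u ω ∂ℙ = ρ * min s u)
    (μ M : ℝ → ℝ) (hμ_nonneg : ∀ t, 0 ≤ t → 0 ≤ μ t)
    (hμ_anti : AntitoneOn μ (Set.Ici 0))
    (hμ_density : ∫ t in Set.Ioi (0:ℝ), μ t = 1)
    (hμ_moment : IntegrableOn (fun t => t * μ t) (Set.Ioi 0))
    (hM : ∀ t, M t = ∫ s in (0:ℝ)..t, μ s)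
    (t : ℝ) (ht : 0 ≤ t) :
    (∫ ω, (∫ s in (0:ℝ)..t, (B s ω) ^ 2 * μ s) * (∫ s in (0:ℝ)..t, (W s ω) ^ 2 * μ s) ∂ℙ) =
      (∫ s in (0:ℝ)..t, M s) ^ 2 - 2 * t * M t * (∫ s in (0:ℝ)..t, M s)
        + (1 + 2 * ρ ^ 2) * t ^ 2 * (M t) ^ 2
        - 8 * ρ ^ 2 * M t * (∫ s in (0:ℝ)..t, s * M s)
        + 4 * ρ ^ 2 * (∫ s in (0:ℝ)..t, s * (M s) ^ 2) :=
  correlated_bm_memorised_cross_moment_general W B hW hB hjoint ρ hcov μ M hμ_anti hM t ht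
end

section
/- For the uniform memory kernel μ(t) = (1/r)·1_{t<r} with r > 0, the functions α(τ) and β(τ) satisfy α(τ) = r²/12 and β(τ) = 5r²/3 for all τ > r; consequently the asphericity A₂ = 1 - 4 lim_{τ→∞} α(τ)/β(τ) equals 4/5. -/
/-!
Once the cumulative kernel `M` equals `1` on `[r, τ]`, every `τ`-dependent term of `α(τ)` and
`β(τ)` cancels: both reduce to combinations of the first moment `m = ∫ s μ(s) ds` and of the
deficit integrals `∫_0^r (1 - M)`, `∫_0^r s (1 - M)`, `∫_0^r s (1 - M²)`. The uniform kernel has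
`M(s) = s / r` on `[0, r]`, so these four numbers are `r/2`, `r/2`, `r²/6`, `r²/4`, which gives
`α = r²/12` and `β = 5r²/3`; hence `1 - 4α/β = 4/5` for every `τ > r`.
-/

open Filter intervalIntegral

/-- Cumulative of the memory kernel: `M(t) = ∫_0^t μ(s) ds`. -/
noncomputable def cumul (μ : ℝ → ℝ) (t : ℝ) : ℝ := ∫ s in (0:ℝ)..t, μ s

/-- The function `α(τ)` from the Asphericity Theorem. -/
noncomputable def alphaFn (μ : ℝ → ℝ) (τ : ℝ) : ℝ :=
  (1/2) * ((∫ s in (0:ℝ)..τ, s * μ s) ^ 2 + (∫ s in (0:ℝ)..τ, cumul μ s) ^ 2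
      - τ ^ 2 * (cumul μ τ) ^ 2)
  + ∫ s in (0:ℝ)..τ, ((4 * s - τ) * cumul μ τ - 2 * s * cumul μ s) * cumul μ s

/-- The function `β(τ)` from the Asphericity Theorem. -/
noncomputable def betaFn (μ : ℝ → ℝ) (τ : ℝ) : ℝ :=
  2 * ((∫ s in (0:ℝ)..τ, s * μ s) ^ 2 + (∫ s in (0:ℝ)..τ, cumul μ s) ^ 2
      + 3 * τ ^ 2 * (cumul μ τ) ^ 2)
  - 4 * ∫ s in (0:ℝ)..τ, ((4 * s + τ) * cumul μ τ - 2 * s * cumul μ s) * cumul μ s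

open Set

section Moments

variable {μ : ℝ → ℝ}

theorem continuous_cumul (hμ : ∀ a b, IntervalIntegrable μ MeasureTheory.volume a b) :
    Continuous (cumul μ) :=
  continuous_primitive hμ 0

theorem integral_eq_sub_integral_sub_of_eqOn {f g : ℝ → ℝ} {a r τ : ℝ} (hf : Continuous f)
    (hg : Continuous g) (hrτ : r ≤ τ) (hfg : EqOn f g (Icc r τ)) :
    ∫ x in a..τ, f x = (∫ x in a..τ, g x) - ∫ x in a..r, (g x - f x) := by
  have hgf : Continuous fun x => g x - f x := hg.sub hf
  have htail : ∫ x in r..τ, (g x - f x) = 0 := by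
    rw [integral_congr (g := fun _ => 0) fun x hx => by simp [hfg (uIcc_of_le hrτ ▸ hx)]]
    simp
  have hsplit := integral_add_adjacent_intervals
    (hgf.intervalIntegrable (μ := MeasureTheory.volume) a r) (hgf.intervalIntegrable r τ)
  rw [htail, add_zero, integral_sub (hg.intervalIntegrable a τ) (hf.intervalIntegrable a τ)]
    at hsplit
  rw [hsplit]
  ring

theorem integral_affine_mul_sub_mul_mul {M : ℝ → ℝ} (hM : Continuous M) (c a τ : ℝ) :
    ∫ s in (0:ℝ)..τ, ((4 * s + c) * a - 2 * s * M s) * M s =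
      4 * a * (∫ s in (0:ℝ)..τ, s * M s) + c * a * (∫ s in (0:ℝ)..τ, M s)
        - 2 * ∫ s in (0:ℝ)..τ, s * M s ^ 2 := by
  have hlin : (fun s => ((4 * s + c) * a - 2 * s * M s) * M s) =
      fun s => 4 * a * (s * M s) + c * a * M s - 2 * (s * M s ^ 2) := by
    ext s; ring
  rw [hlin, integral_sub, integral_add, integral_const_mul, integral_const_mul, integral_const_mul]
  all_goals apply Continuous.intervalIntegrable; fun_prop

variable {r τ : ℝ}

theorem integral_cumul_eq_of_cumul_eq_one
    (hμ : ∀ a b, IntervalIntegrable μ MeasureTheory.volume a b) (hrτ : r ≤ τ)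
    (hone : ∀ s ∈ Icc r τ, cumul μ s = 1) :
    (∫ s in (0:ℝ)..τ, cumul μ s) = τ - ∫ s in (0:ℝ)..r, (1 - cumul μ s) ∧
    (∫ s in (0:ℝ)..τ, s * cumul μ s) = τ ^ 2 / 2 - ∫ s in (0:ℝ)..r, (s - s * cumul μ s) ∧
    (∫ s in (0:ℝ)..τ, s * cumul μ s ^ 2) =
      τ ^ 2 / 2 - ∫ s in (0:ℝ)..r, (s - s * cumul μ s ^ 2) := by
  have hc := continuous_cumul hμ
  refine ⟨?_, ?_, ?_⟩
  · rw [integral_eq_sub_integral_sub_of_eqOn hc continuous_const hrτ hone, integral_one, sub_zero]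
  · rw [integral_eq_sub_integral_sub_of_eqOn (by fun_prop) continuous_id' hrτ
      fun s hs => by simp [hone s hs], integral_id]
    ring
  · rw [integral_eq_sub_integral_sub_of_eqOn (by fun_prop) continuous_id' hrτ
      fun s hs => by simp [hone s hs], integral_id]
    ring

theorem alphaFn_eq_of_cumul_eq_one (hμ : ∀ a b, IntervalIntegrable μ MeasureTheory.volume a b)
    (hrτ : r ≤ τ) (hone : ∀ s ∈ Icc r τ, cumul μ s = 1) :
    alphaFn μ τ =
      ((∫ s in (0:ℝ)..τ, s * μ s) ^ 2 + (∫ s in (0:ℝ)..r, (1 - cumul μ s)) ^ 2) / 2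
        + 2 * (∫ s in (0:ℝ)..r, (s - s * cumul μ s ^ 2))
        - 4 * ∫ s in (0:ℝ)..r, (s - s * cumul μ s) := by
  obtain ⟨h0, h1, h2⟩ := integral_cumul_eq_of_cumul_eq_one hμ hrτ hone
  rw [alphaFn, hone τ ⟨hrτ, le_rfl⟩]
  simp only [sub_eq_add_neg (4 * _) τ]
  rw [integral_affine_mul_sub_mul_mul (continuous_cumul hμ), h0, h1, h2]
  ring

theorem betaFn_eq_of_cumul_eq_one (hμ : ∀ a b, IntervalIntegrable μ MeasureTheory.volume a b)
    (hrτ : r ≤ τ) (hone : ∀ s ∈ Icc r τ, cumul μ s = 1) :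
    betaFn μ τ =
      2 * ((∫ s in (0:ℝ)..τ, s * μ s) ^ 2 + (∫ s in (0:ℝ)..r, (1 - cumul μ s)) ^ 2)
        + 16 * (∫ s in (0:ℝ)..r, (s - s * cumul μ s))
        - 8 * ∫ s in (0:ℝ)..r, (s - s * cumul μ s ^ 2) := by
  obtain ⟨h0, h1, h2⟩ := integral_cumul_eq_of_cumul_eq_one hμ hrτ hone
  rw [betaFn, hone τ ⟨hrτ, le_rfl⟩, integral_affine_mul_sub_mul_mul (continuous_cumul hμ),
    h0, h1, h2]
  ring

end Moments

section UniformKernel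

noncomputable def uniformKernel (r t : ℝ) : ℝ := if t < r then 1 / r else 0

variable {r : ℝ}

theorem antitone_uniformKernel (hr : 0 < r) : Antitone (uniformKernel r) := by
  intro s t hst
  unfold uniformKernel
  split_ifs <;> first | rfl | positivity | linarith

theorem intervalIntegrable_uniformKernel (hr : 0 < r) (a b : ℝ) :
    IntervalIntegrable (uniformKernel r) MeasureTheory.volume a b :=
  (antitone_uniformKernel hr).intervalIntegrable

theorem integral_mul_uniformKernel_of_le {φ : ℝ → ℝ} {a b : ℝ} (hab : a ≤ b) (hb : b ≤ r) :
    ∫ s in a..b, φ s * uniformKernel r s = (∫ s in a..b, φ s) / r := by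
  rw [← integral_div]
  refine integral_congr_Ioo_of_le hab fun s hs => ?_
  simp [uniformKernel, hs.2.trans_le hb, div_eq_mul_inv]

theorem integral_mul_uniformKernel_of_ge {φ : ℝ → ℝ} {a b : ℝ} (ha : r ≤ a) (hb : r ≤ b) :
    ∫ s in a..b, φ s * uniformKernel r s = 0 := by
  rw [integral_congr (g := fun _ => 0) fun s hs => ?_, integral_zero]
  have : r ≤ s := (le_min ha hb).trans hs.1
  simp [uniformKernel, this.not_gt]

theorem integral_mul_uniformKernel {φ : ℝ → ℝ} (hφ : Continuous φ) (hr : 0 < r) {τ : ℝ}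
    (hrτ : r ≤ τ) : ∫ s in (0:ℝ)..τ, φ s * uniformKernel r s = (∫ s in (0:ℝ)..r, φ s) / r := by
  have hint (a b : ℝ) : IntervalIntegrable (fun s => φ s * uniformKernel r s)
      MeasureTheory.volume a b :=
    (intervalIntegrable_uniformKernel hr a b).continuousOn_mul hφ.continuousOn
  rw [← integral_add_adjacent_intervals (hint 0 r) (hint r τ),
    integral_mul_uniformKernel_of_le hr.le le_rfl, integral_mul_uniformKernel_of_ge le_rfl hrτ,
    add_zero]

theorem cumul_uniformKernel_of_mem_Icc {s : ℝ} (hs : s ∈ Icc 0 r) :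
    cumul (uniformKernel r) s = s / r := by
  simpa [cumul] using integral_mul_uniformKernel_of_le (φ := fun _ => 1) hs.1 hs.2

theorem cumul_uniformKernel_of_le (hr : 0 < r) {s : ℝ} (hs : r ≤ s) :
    cumul (uniformKernel r) s = 1 := by
  simpa [cumul, hr.ne'] using integral_mul_uniformKernel (φ := fun _ => 1) continuous_const hr hs

theorem integral_one_sub_cumul_uniformKernel (hr : 0 < r) :
    ∫ s in (0:ℝ)..r, (1 - cumul (uniformKernel r) s) = r / 2 := by
  rw [integral_congr (g := fun s => 1 - s / r) fun s hs => by
    rw [cumul_uniformKernel_of_mem_Icc (uIcc_of_le hr.le ▸ hs)]]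
  rw [integral_sub, integral_one, integral_div, integral_id]
  · field_simp; ring
  all_goals apply Continuous.intervalIntegrable; fun_prop

theorem integral_sub_mul_cumul_uniformKernel (hr : 0 < r) :
    ∫ s in (0:ℝ)..r, (s - s * cumul (uniformKernel r) s) = r ^ 2 / 6 := by
  rw [integral_congr (g := fun s => s - s ^ 2 / r) fun s hs => by
    simp only [cumul_uniformKernel_of_mem_Icc (uIcc_of_le hr.le ▸ hs)]; ring]
  rw [integral_sub, integral_id, integral_div, integral_pow]
  · field_simp; ring
  all_goals apply Continuous.intervalIntegrable; fun_prop

theorem integral_sub_mul_cumul_sq_uniformKernel (hr : 0 < r) :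
    ∫ s in (0:ℝ)..r, (s - s * cumul (uniformKernel r) s ^ 2) = r ^ 2 / 4 := by
  rw [integral_congr (g := fun s => s - s ^ 3 / r ^ 2) fun s hs => by
    simp only [cumul_uniformKernel_of_mem_Icc (uIcc_of_le hr.le ▸ hs)]; ring]
  rw [integral_sub, integral_id, integral_div, integral_pow]
  · field_simp; ring
  all_goals apply Continuous.intervalIntegrable; fun_prop

variable {τ : ℝ}

theorem alphaFn_uniformKernel (hr : 0 < r) (hrτ : r ≤ τ) :
    alphaFn (uniformKernel r) τ = r ^ 2 / 12 := by
  rw [alphaFn_eq_of_cumul_eq_one (intervalIntegrable_uniformKernel hr) hrτ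
      fun s hs => cumul_uniformKernel_of_le hr hs.1,
    integral_mul_uniformKernel continuous_id' hr hrτ, integral_id,
    integral_one_sub_cumul_uniformKernel hr, integral_sub_mul_cumul_uniformKernel hr,
    integral_sub_mul_cumul_sq_uniformKernel hr]
  field_simp
  ring

theorem betaFn_uniformKernel (hr : 0 < r) (hrτ : r ≤ τ) :
    betaFn (uniformKernel r) τ = 5 / 3 * r ^ 2 := by
  rw [betaFn_eq_of_cumul_eq_one (intervalIntegrable_uniformKernel hr) hrτ
      fun s hs => cumul_uniformKernel_of_le hr hs.1,
    integral_mul_uniformKernel continuous_id' hr hrτ, integral_id,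
    integral_one_sub_cumul_uniformKernel hr, integral_sub_mul_cumul_uniformKernel hr,
    integral_sub_mul_cumul_sq_uniformKernel hr]
  field_simp
  ring

end UniformKernel

theorem asphericity_uniform_kernel (r : ℝ) (hr : 0 < r) :
    (∀ τ : ℝ, r < τ →
        alphaFn (fun t => if t < r then 1 / r else 0) τ = r ^ 2 / 12 ∧
        betaFn (fun t => if t < r then 1 / r else 0) τ = 5 / 3 * r ^ 2) ∧
    Tendsto (fun τ : ℝ =>
        1 - 4 * (alphaFn (fun t => if t < r then 1 / r else 0) τ /
          betaFn (fun t => if t < r then 1 / r else 0) τ))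
      atTop (nhds (4 / 5)) := by
  have hαβ : ∀ τ : ℝ, r < τ →
      alphaFn (fun t => if t < r then 1 / r else 0) τ = r ^ 2 / 12 ∧
      betaFn (fun t => if t < r then 1 / r else 0) τ = 5 / 3 * r ^ 2 := fun τ hτ =>
    ⟨alphaFn_uniformKernel hr hτ.le, betaFn_uniformKernel hr hτ.le⟩
  refine ⟨hαβ, tendsto_const_nhds.congr' ?_⟩
  filter_upwards [eventually_gt_atTop r] with τ hτ
  rw [(hαβ τ hτ).1, (hαβ τ hτ).2]
  field_simp
  norm_num
end

section
/- For the Lomax memory kernel μ(t) = a(1+t)^{-(a+1)} with shape a > 1, the asphericity A₂ = 1 - 4 lim_{τ→∞} α(τ)/β(τ) equals 2(a-1)/(3a-2); in particular A₂ → 0 as a → 1⁺. -/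
open Filter intervalIntegral

/-! Writing `S = 1 - M` for the survival function of the kernel, `α` and `β` are polynomials in
`∫₀^τ s μ`, `∫₀^τ S`, `τ S(τ)`, `S(τ) ∫₀^τ s S` and `∫₀^τ s S²`. Integration by parts gives
`∫₀^τ s μ = ∫₀^τ S - τ S(τ)`, and `0 ≤ S(τ) ∫₀^τ s S ≤ τ S(τ) ∫₀^τ S`. Hence, as soon as
`τ S(τ) → 0`, `∫₀^τ S → m` and `∫₀^τ s S² → v`, we get `α → m² - 2v` and `β → 4m² + 8v`.
For the Lomax kernel, `S(t) = (1 + t)^(-a)`, so `m = 1/(a-1)` and `v = 1/(2(a-1)(2a-1))`. -/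

open Set Topology
open MeasureTheory (volume)

noncomputable def survival (μ : ℝ → ℝ) (t : ℝ) : ℝ := 1 - cumul μ t

variable {μ : ℝ → ℝ} {τ : ℝ}

lemma cumul_eq_one_sub_survival (μ : ℝ → ℝ) (t : ℝ) : cumul μ t = 1 - survival μ t :=
  (sub_sub_cancel 1 _).symm

lemma continuousOn_survival (hμ : IntervalIntegrable μ volume 0 τ) :
    ContinuousOn (survival μ) (uIcc 0 τ) :=
  continuousOn_const.sub (continuousOn_primitive_interval' hμ left_mem_uIcc)

lemma integral_cumul (hμ : IntervalIntegrable μ volume 0 τ) :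
    ∫ s in 0..τ, cumul μ s = τ - ∫ s in 0..τ, survival μ s := by
  simp only [cumul_eq_one_sub_survival]
  rw [integral_sub intervalIntegrable_const (continuousOn_survival hμ).intervalIntegrable]
  simp

lemma integral_quadratic_cumul (hμ : IntervalIntegrable μ volume 0 τ) (c : ℝ) :
    ∫ s in 0..τ, ((4 * s + c) * cumul μ τ - 2 * s * cumul μ s) * cumul μ s =
      (1 - 2 * survival μ τ) * τ ^ 2 + c * cumul μ τ * τ
        - c * cumul μ τ * (∫ s in 0..τ, survival μ s)
        + 4 * survival μ τ * (∫ s in 0..τ, s * survival μ s)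
        - 2 * ∫ s in 0..τ, s * survival μ s ^ 2 := by
  have hS := continuousOn_survival hμ
  have h0 : IntervalIntegrable (fun s => (2 - 4 * survival μ τ) * s) volume 0 τ :=
    (continuous_const.mul continuous_id).intervalIntegrable _ _
  have h1 := h0.add (intervalIntegrable_const (c := c * cumul μ τ))
  have h2 : IntervalIntegrable (survival μ) volume 0 τ := hS.intervalIntegrable
  have h3 : IntervalIntegrable (fun s => s * survival μ s) volume 0 τ :=
    (continuousOn_id.mul hS).intervalIntegrable
  have h4 : IntervalIntegrable (fun s => s * survival μ s ^ 2) volume 0 τ :=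
    (continuousOn_id.mul (hS.pow 2)).intervalIntegrable
  calc _ = ∫ s in 0..τ, ((2 - 4 * survival μ τ) * s + c * cumul μ τ
          - c * cumul μ τ * survival μ s + 4 * survival μ τ * (s * survival μ s)
          - 2 * (s * survival μ s ^ 2)) := by
        congr 1; ext s; simp only [cumul_eq_one_sub_survival]; ring
    _ = _ := by
        rw [integral_sub (((h1.sub (h2.const_mul _)).add (h3.const_mul _))) (h4.const_mul _),
          integral_add (h1.sub (h2.const_mul _)) (h3.const_mul _), integral_sub h1 (h2.const_mul _),
          integral_add h0 intervalIntegrable_const]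
        simp only [integral_const_mul, integral_const, smul_eq_mul]
        rw [integral_const_mul, integral_id]
        ring

lemma alphaFn_eq (hμ : IntervalIntegrable μ volume 0 τ) :
    alphaFn μ τ = ((∫ s in 0..τ, s * μ s) ^ 2 + (∫ s in 0..τ, survival μ s) ^ 2) / 2
      - (τ * survival μ τ) ^ 2 / 2 - τ * survival μ τ * (∫ s in 0..τ, survival μ s)
      + 4 * survival μ τ * (∫ s in 0..τ, s * survival μ s)
      - 2 * ∫ s in 0..τ, s * survival μ s ^ 2 := by
  have h := integral_quadratic_cumul hμ (-τ)
  simp only [← sub_eq_add_neg] at h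
  rw [alphaFn, h, integral_cumul hμ, cumul_eq_one_sub_survival μ τ]
  ring

lemma betaFn_eq (hμ : IntervalIntegrable μ volume 0 τ) :
    betaFn μ τ = 2 * ((∫ s in 0..τ, s * μ s) ^ 2 + (∫ s in 0..τ, survival μ s) ^ 2)
      + 6 * (τ * survival μ τ) ^ 2 - 4 * τ * survival μ τ * (∫ s in 0..τ, survival μ s)
      - 16 * survival μ τ * (∫ s in 0..τ, s * survival μ s)
      + 8 * ∫ s in 0..τ, s * survival μ s ^ 2 := by
  rw [betaFn, integral_quadratic_cumul hμ τ, integral_cumul hμ, cumul_eq_one_sub_survival μ τ]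
  ring

lemma integral_mul_eq_integral_survival_sub (hμ : ContinuousOn μ (uIcc 0 τ)) :
    ∫ s in 0..τ, s * μ s = (∫ s in 0..τ, survival μ s) - τ * survival μ τ := by
  have hM : ContinuousOn (cumul μ) (uIcc 0 τ) :=
    continuousOn_primitive_interval' hμ.intervalIntegrable left_mem_uIcc
  have hderiv : ∀ x ∈ Ioo (min 0 τ) (max 0 τ), HasDerivAt (cumul μ) (μ x) x := fun x hx =>
    integral_hasDerivAt_right
      (hμ.mono (uIcc_subset_uIcc_left (Ioo_subset_Icc_self hx))).intervalIntegrable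
      ((hμ.mono Ioo_subset_Icc_self).stronglyMeasurableAtFilter isOpen_Ioo x hx)
      (hμ.continuousAt (Icc_mem_nhds hx.1 hx.2))
  rw [integral_mul_deriv_eq_deriv_mul_of_hasDerivAt (u := fun x => x) continuousOn_id hM
    (fun x _ => hasDerivAt_id' x) hderiv intervalIntegrable_const hμ.intervalIntegrable]
  simp only [one_mul, integral_cumul hμ.intervalIntegrable, cumul_eq_one_sub_survival μ τ]
  ring

lemma uIcc_zero_subset_Ici (hτ : 0 ≤ τ) : uIcc 0 τ ⊆ Ici 0 := by
  rw [uIcc_of_le hτ]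
  exact Icc_subset_Ici_self

section Limits

variable {m v : ℝ}

lemma tendsto_integral_mul_kernel (hμ : ContinuousOn μ (Ici 0))
    (hτS : Tendsto (fun τ => τ * survival μ τ) atTop (𝓝 0))
    (hm : Tendsto (fun τ => ∫ s in 0..τ, survival μ s) atTop (𝓝 m)) :
    Tendsto (fun τ => ∫ s in 0..τ, s * μ s) atTop (𝓝 m) := by
  rw [← sub_zero m]
  refine (hm.sub hτS).congr' ?_
  filter_upwards [eventually_ge_atTop 0] with τ hτ
  rw [integral_mul_eq_integral_survival_sub (hμ.mono (uIcc_zero_subset_Ici hτ))]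

lemma tendsto_survival_mul_integral_mul_survival (hμ : ContinuousOn μ (Ici 0))
    (hS : ∀ t, 0 ≤ t → 0 ≤ survival μ t)
    (hτS : Tendsto (fun τ => τ * survival μ τ) atTop (𝓝 0))
    (hm : Tendsto (fun τ => ∫ s in 0..τ, survival μ s) atTop (𝓝 m)) :
    Tendsto (fun τ => survival μ τ * ∫ s in 0..τ, s * survival μ s) atTop (𝓝 0) := by
  have hupper := hτS.mul hm
  rw [zero_mul] at hupper
  refine tendsto_of_tendsto_of_tendsto_of_le_of_le' tendsto_const_nhds hupper ?_ ?_
  all_goals filter_upwards [eventually_ge_atTop 0] with τ hτ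
  · exact mul_nonneg (hS τ hτ) (integral_nonneg hτ fun s hs => mul_nonneg hs.1 (hS s hs.1))
  · have hSτ := continuousOn_survival
      ((hμ.mono (uIcc_zero_subset_Ici hτ)).intervalIntegrable (μ := volume))
    calc survival μ τ * ∫ s in 0..τ, s * survival μ s
        ≤ survival μ τ * ∫ s in 0..τ, τ * survival μ s :=
          mul_le_mul_of_nonneg_left (integral_mono_on hτ
            (continuousOn_id.mul hSτ).intervalIntegrable
            ((hSτ.const_mul τ).intervalIntegrable (μ := volume))
            fun s hs => mul_le_mul_of_nonneg_right hs.2 (hS s hs.1)) (hS τ hτ)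
      _ = τ * survival μ τ * ∫ s in 0..τ, survival μ s := by
          rw [integral_const_mul]; ring

theorem tendsto_alphaFn (hμ : ContinuousOn μ (Ici 0)) (hS : ∀ t, 0 ≤ t → 0 ≤ survival μ t)
    (hτS : Tendsto (fun τ => τ * survival μ τ) atTop (𝓝 0))
    (hm : Tendsto (fun τ => ∫ s in 0..τ, survival μ s) atTop (𝓝 m))
    (hv : Tendsto (fun τ => ∫ s in 0..τ, s * survival μ s ^ 2) atTop (𝓝 v)) :
    Tendsto (alphaFn μ) atTop (𝓝 (m ^ 2 - 2 * v)) := by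
  have hI := tendsto_integral_mul_kernel hμ hτS hm
  have hSg := tendsto_survival_mul_integral_mul_survival hμ hS hτS hm
  have h := (((((hI.pow 2).add (hm.pow 2)).div_const 2).sub ((hτS.pow 2).div_const 2)).sub
    (hτS.mul hm)).add (hSg.const_mul 4) |>.sub (hv.const_mul 2)
  convert h.congr' ?_ using 2
  · ring
  filter_upwards [eventually_ge_atTop 0] with τ hτ
  rw [alphaFn_eq (hμ.mono (uIcc_zero_subset_Ici hτ)).intervalIntegrable]
  ring

theorem tendsto_betaFn (hμ : ContinuousOn μ (Ici 0)) (hS : ∀ t, 0 ≤ t → 0 ≤ survival μ t)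
    (hτS : Tendsto (fun τ => τ * survival μ τ) atTop (𝓝 0))
    (hm : Tendsto (fun τ => ∫ s in 0..τ, survival μ s) atTop (𝓝 m))
    (hv : Tendsto (fun τ => ∫ s in 0..τ, s * survival μ s ^ 2) atTop (𝓝 v)) :
    Tendsto (betaFn μ) atTop (𝓝 (4 * m ^ 2 + 8 * v)) := by
  have hI := tendsto_integral_mul_kernel hμ hτS hm
  have hSg := tendsto_survival_mul_integral_mul_survival hμ hS hτS hm
  have h := (((((hI.pow 2).add (hm.pow 2)).const_mul 2).add ((hτS.pow 2).const_mul 6)).sub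
    ((hτS.mul hm).const_mul 4)).sub (hSg.const_mul 16) |>.add (hv.const_mul 8)
  convert h.congr' ?_ using 2
  · ring
  filter_upwards [eventually_ge_atTop 0] with τ hτ
  rw [betaFn_eq (hμ.mono (uIcc_zero_subset_Ici hτ)).intervalIntegrable]
  ring

end Limits

section OneAddRpow

variable {c : ℝ}

lemma continuousOn_one_add_rpow (c : ℝ) : ContinuousOn (fun s : ℝ => (1 + s) ^ c) (Ici 0) :=
  (continuousOn_const.add continuousOn_id).rpow_const fun s (hs : 0 ≤ s) =>
    Or.inl (show 1 + s ≠ 0 by positivity)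

lemma integral_one_add_rpow (hc : c ≠ -1) {t : ℝ} (ht : 0 ≤ t) :
    ∫ s in 0..t, (1 + s) ^ c = ((1 + t) ^ (c + 1) - 1) / (c + 1) := by
  rw [integral_comp_add_left (fun x => x ^ c), integral_rpow (Or.inr ⟨hc, ?_⟩), add_zero,
    Real.one_rpow]
  rw [add_zero, uIcc_of_le (by linarith)]
  exact fun h => absurd h.1 (by norm_num)

lemma tendsto_one_add_rpow_atTop (hc : c < 0) :
    Tendsto (fun τ : ℝ => (1 + τ) ^ c) atTop (𝓝 0) := by
  simpa [Function.comp_def] using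
    (tendsto_rpow_neg_atTop (neg_pos.mpr hc)).comp (tendsto_atTop_add_const_left _ 1 tendsto_id)

lemma tendsto_integral_one_add_rpow (hc : c < -1) :
    Tendsto (fun τ => ∫ s in 0..τ, (1 + s) ^ c) atTop (𝓝 (-1 / (c + 1))) := by
  have h := ((tendsto_one_add_rpow_atTop (by linarith : c + 1 < 0)).sub_const 1).div_const (c + 1)
  rw [zero_sub] at h
  refine h.congr' ?_
  filter_upwards [eventually_ge_atTop 0] with τ hτ
  rw [integral_one_add_rpow (by linarith) hτ]

lemma mul_one_add_rpow {s : ℝ} (hs : 0 ≤ s) (c : ℝ) :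
    s * (1 + s) ^ c = (1 + s) ^ (c + 1) - (1 + s) ^ c := by
  rw [Real.rpow_add_one (by linarith)]
  ring

end OneAddRpow

noncomputable def lomaxKernel (a t : ℝ) : ℝ := a * (1 + t) ^ (-(a + 1))

section Lomax

variable {a : ℝ}

lemma continuousOn_lomaxKernel (a : ℝ) : ContinuousOn (lomaxKernel a) (Ici 0) :=
  continuousOn_const.mul (continuousOn_one_add_rpow _)

lemma survival_lomaxKernel (ha : a ≠ 0) {t : ℝ} (ht : 0 ≤ t) :
    survival (lomaxKernel a) t = (1 + t) ^ (-a) := by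
  unfold survival cumul lomaxKernel
  rw [integral_const_mul,
    integral_one_add_rpow (by contrapose! ha; linarith) ht, show -(a + 1) + 1 = -a by ring]
  field_simp
  ring

lemma survival_lomaxKernel_nonneg (ha : a ≠ 0) {t : ℝ} (ht : 0 ≤ t) :
    0 ≤ survival (lomaxKernel a) t := by
  rw [survival_lomaxKernel ha ht]
  positivity

lemma tendsto_mul_survival_lomaxKernel (ha : 1 < a) :
    Tendsto (fun τ => τ * survival (lomaxKernel a) τ) atTop (𝓝 0) := by
  rw [← sub_zero 0]
  refine ((tendsto_one_add_rpow_atTop (by linarith : -a + 1 < 0)).sub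
    (tendsto_one_add_rpow_atTop (by linarith : -a < 0))).congr' ?_
  filter_upwards [eventually_ge_atTop 0] with τ hτ
  rw [survival_lomaxKernel (by positivity) hτ, mul_one_add_rpow hτ]

lemma tendsto_integral_survival_lomaxKernel (ha : 1 < a) :
    Tendsto (fun τ => ∫ s in 0..τ, survival (lomaxKernel a) s) atTop (𝓝 (1 / (a - 1))) := by
  convert (tendsto_integral_one_add_rpow (by linarith : -a < -1)).congr' ?_ using 2
  · rw [neg_add_eq_sub, ← neg_sub, div_neg, neg_div]
  filter_upwards [eventually_ge_atTop 0] with τ hτ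
  refine integral_congr fun s hs => ?_
  rw [uIcc_of_le hτ] at hs
  exact (survival_lomaxKernel (by positivity) hs.1).symm

lemma tendsto_integral_mul_survival_sq_lomaxKernel (ha : 1 < a) :
    Tendsto (fun τ => ∫ s in 0..τ, s * survival (lomaxKernel a) s ^ 2) atTop
      (𝓝 (1 / (2 * (a - 1) * (2 * a - 1)))) := by
  have h := (tendsto_integral_one_add_rpow (by linarith : -(2 * a) + 1 < -1)).sub
    (tendsto_integral_one_add_rpow (by linarith : -(2 * a) < -1))
  convert h.congr' ?_ using 2
  · have h1 : a - 1 ≠ 0 := by linarith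
    have h2 : 2 * a - 1 ≠ 0 := by linarith
    rw [show -(2 * a) + 1 + 1 = -(2 * (a - 1)) by ring, show -(2 * a) + 1 = -(2 * a - 1) by ring]
    field_simp
    ring
  filter_upwards [eventually_ge_atTop 0] with τ hτ
  have hint (c : ℝ) : IntervalIntegrable (fun s : ℝ => (1 + s) ^ c) volume 0 τ :=
    ((continuousOn_one_add_rpow c).mono (uIcc_zero_subset_Ici hτ)).intervalIntegrable
  rw [← integral_sub (hint _) (hint _)]
  refine integral_congr fun s hs => ?_
  rw [uIcc_of_le hτ] at hs
  rw [survival_lomaxKernel (by positivity) hs.1, ← Real.rpow_mul_natCast (by linarith [hs.1]),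
    ← mul_one_add_rpow hs.1]
  push_cast
  ring_nf

lemma tendsto_alphaFn_lomaxKernel (ha : 1 < a) :
    Tendsto (alphaFn (lomaxKernel a)) atTop (𝓝 (a / ((a - 1) ^ 2 * (2 * a - 1)))) := by
  have h1 : 0 < a - 1 := by linarith
  have h2 : 0 < 2 * a - 1 := by linarith
  convert tendsto_alphaFn (continuousOn_lomaxKernel a)
    (fun t => survival_lomaxKernel_nonneg (by positivity)) (tendsto_mul_survival_lomaxKernel ha)
    (tendsto_integral_survival_lomaxKernel ha) (tendsto_integral_mul_survival_sq_lomaxKernel ha)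
    using 2
  rw [div_pow, one_pow, mul_one_div, div_sub_div _ _ (by positivity) (by positivity),
    div_eq_div_iff (by positivity) (by positivity)]
  ring

lemma tendsto_betaFn_lomaxKernel (ha : 1 < a) :
    Tendsto (betaFn (lomaxKernel a)) atTop
      (𝓝 (4 * (3 * a - 2) / ((a - 1) ^ 2 * (2 * a - 1)))) := by
  have h1 : 0 < a - 1 := by linarith
  have h2 : 0 < 2 * a - 1 := by linarith
  convert tendsto_betaFn (continuousOn_lomaxKernel a)
    (fun t => survival_lomaxKernel_nonneg (by positivity)) (tendsto_mul_survival_lomaxKernel ha)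
    (tendsto_integral_survival_lomaxKernel ha) (tendsto_integral_mul_survival_sq_lomaxKernel ha)
    using 2
  rw [div_pow, one_pow, mul_one_div, mul_one_div, div_add_div _ _ (by positivity) (by positivity),
    div_eq_div_iff (by positivity) (by positivity)]
  ring

end Lomax

theorem asphericity_lomax_kernel (a : ℝ) (ha : 1 < a) :
    Tendsto (alphaFn (fun t => a * (1 + t) ^ (-(a + 1)))) atTop
      (nhds (a / ((a - 1) ^ 2 * (2 * a - 1)))) ∧
    Tendsto (betaFn (fun t => a * (1 + t) ^ (-(a + 1)))) atTop
      (nhds (4 * (3 * a - 2) / ((a - 1) ^ 2 * (2 * a - 1)))) ∧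
    Tendsto (fun τ : ℝ =>
        1 - 4 * (alphaFn (fun t => a * (1 + t) ^ (-(a + 1))) τ /
          betaFn (fun t => a * (1 + t) ^ (-(a + 1))) τ))
      atTop (nhds (2 * (a - 1) / (3 * a - 2))) ∧
    Tendsto (fun a : ℝ => 2 * (a - 1) / (3 * a - 2))
      (nhdsWithin 1 (Set.Ioi 1)) (nhds 0) := by
  have h1 : 0 < a - 1 := by linarith
  have h2 : 0 < 2 * a - 1 := by linarith
  have h3 : 0 < 3 * a - 2 := by linarith
  have hα := tendsto_alphaFn_lomaxKernel ha
  have hβ := tendsto_betaFn_lomaxKernel ha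
  refine ⟨hα, hβ, ?_, ?_⟩
  · have hvalue : 2 * (a - 1) / (3 * a - 2) = 1 - 4 * (a / ((a - 1) ^ 2 * (2 * a - 1)) /
        (4 * (3 * a - 2) / ((a - 1) ^ 2 * (2 * a - 1)))) := by
      rw [div_div_div_cancel_right₀ (by positivity), mul_div_assoc',
        mul_div_mul_left _ _ four_ne_zero, eq_sub_iff_add_eq, ← add_div,
        div_eq_one_iff_eq h3.ne']
      ring
    rw [hvalue]
    exact tendsto_const_nhds.sub ((hα.div hβ (by positivity)).const_mul 4)
  · have hcont : ContinuousAt (fun a : ℝ => 2 * (a - 1) / (3 * a - 2)) 1 :=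
      ContinuousAt.div (by fun_prop) (by fun_prop) (by norm_num)
    simpa using hcont.tendsto.mono_left nhdsWithin_le_nhds
end
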